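/- arXiv:2201.01063 — 6 statements merged into one kernel-verified Lean document; each statement's English description precedes it below -/
import Mathlib

section
/- Let n ≥ 2 and let B be the n×n binary matrix whose first row is (0,1,1,…,1) and whose remaining rows are zero. Then the real Bott manifold M(B) = (S¹)ⁿ/G(B) is homeomorphic to the n-dimensional Klein bottle K_n. -/
open Complex

/-- The relation on the `n`-torus generating the Klein identification
`(z₁,…,z_{n−1},z_n) ~ (z̄₁,…,z̄_{n−1},−z_n)`. -/
def kleinRel (n : ℕ) (z w : Fin n → Circle) : Prop :=
  ∀ i : Fin n, (w i : ℂ) = if (i : ℕ) = n - 1 then -(z i : ℂ) else (starRingEnd ℂ) (z i : ℂ)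

/-- The `n`-dimensional Klein bottle `K_n`, as the quotient of the torus. -/
def Klein (n : ℕ) : Type := Quot (kleinRel n)

noncomputable instance (n : ℕ) : TopologicalSpace (Klein n) := by unfold Klein; infer_instance

/-- The relation on the `n`-torus whose equivalence closure is the orbit relation of the
group `G(A)` generated by the Bott involutions `a₁, …, a_n` of the binary matrix `A`:
the `i`-th involution negates the `i`-th coordinate and conjugates the `j`-th coordinate
exactly when `Aⁱⱼ = 1`. -/
def bottRel (n : ℕ) (A : Fin n → Fin n → Bool) (z w : Fin n → Circle) : Prop :=
  ∃ i : Fin n, ∀ j : Fin n,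
    (w j : ℂ) =
      if j = i then -(z j : ℂ)
      else if A i j then (starRingEnd ℂ) (z j : ℂ) else (z j : ℂ)

/-- The real Bott manifold `M(A) = (S¹)ⁿ / G(A)`. -/
def BottManifold (n : ℕ) (A : Fin n → Fin n → Bool) : Type := Quot (bottRel n A)

noncomputable instance (n : ℕ) (A : Fin n → Fin n → Bool) : TopologicalSpace (BottManifold n A) := by
  unfold BottManifold; infer_instance

/-!
The map `F = kleinCover`, `F(z)ᵢ = z_{n+1-i}^{eᵢ}` with `e_n = 1` and `eᵢ = 2` otherwise, is a
continuous surjection of the torus onto itself, hence a quotient map. It collapses exactly the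
orbits of the pure sign changes `a₂, …, a_n` (the rows of `B` other than the first vanish), and
it conjugates `a₁`, which negates the first coordinate and conjugates the others, into the Klein
involution. So two points have the same image in `M(B)` iff their images under `F` have the same
image in `K_n`, and `F` descends to a homeomorphism `M(B) ≃ₜ K_n`.
-/

open Topology

lemma Fin.val_rev_eq_zero_iff {n : ℕ} {k : Fin n} : (k.rev : ℕ) = 0 ↔ (k : ℕ) = n - 1 := by
  rw [Fin.val_rev]
  omega

lemma Circle.pow_surjective {m : ℕ} (hm : m ≠ 0) :
    Function.Surjective (· ^ m : Circle → Circle) := by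
  intro w
  obtain ⟨t, rfl⟩ := Circle.exp_surjective w
  refine ⟨Circle.exp (t / m), ?_⟩
  simp only [← Circle.exp_nsmul, nsmul_eq_mul, mul_div_cancel₀ t (Nat.cast_ne_zero.2 hm)]

lemma Circle.sq_eq_sq_iff {a b : Circle} : a ^ 2 = b ^ 2 ↔ a = b ∨ a = -b := by
  simp only [Circle.ext_iff, Circle.coe_pow, Circle.coe_neg, sq_eq_sq_iff_eq_or_eq_neg]

lemma Function.Involutive.quot_mk_eq_mk_iff {α : Type*} {r : α → α → Prop} {f : α → α}
    (hf : Function.Involutive f) (hr : ∀ a b, r a b ↔ b = f a) {a b : α} :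
    Quot.mk r a = Quot.mk r b ↔ b = a ∨ b = f a := by
  refine ⟨fun h => ?_, ?_⟩
  · have hequiv : Equivalence fun a b : α => b = a ∨ b = f a :=
      { refl := fun _ => Or.inl rfl
        symm := by rintro a b (rfl | rfl) <;> simp [hf _]
        trans := by rintro a b c (rfl | rfl) (rfl | rfl) <;> simp [hf _] }
    exact hequiv.eqvGen_iff.1 <|
      Relation.EqvGen.mono (fun a b hab => Or.inr ((hr a b).1 hab)) _ _ (Quot.eqvGen_exact h)
  · rintro (rfl | rfl)
    exacts [rfl, Quot.sound ((hr a _).2 rfl)]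

noncomputable def Topology.IsQuotientMap.quotHomeomorph {X Y : Type*} [TopologicalSpace X]
    [TopologicalSpace Y] {r : X → X → Prop} {s : Y → Y → Prop} {F : X → Y}
    (hF : IsQuotientMap F) (hr : ∀ x x', r x x' → Quot.mk s (F x) = Quot.mk s (F x'))
    (hs : ∀ x x', Quot.mk s (F x) = Quot.mk s (F x') → Quot.mk r x = Quot.mk r x') :
    Quot r ≃ₜ Quot s :=
  let f : Quot r → Quot s := Quot.lift (fun x => Quot.mk s (F x)) hr
  have hf : IsHomeomorph f := by
    refine isHomeomorph_iff_isQuotientMap_injective.2 ⟨?_, ?_⟩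
    · exact IsQuotientMap.of_comp continuous_quot_mk
        (continuous_quot_lift _ (continuous_quot_mk.comp hF.continuous))
        (isQuotientMap_quot_mk.comp hF)
    · rintro ⟨x⟩ ⟨x'⟩ h
      exact hs x x' h
  hf.homeomorph f

noncomputable def kleinInvolution (n : ℕ) (u : Fin n → Circle) (i : Fin n) : Circle :=
  if (i : ℕ) = n - 1 then -u i else (u i)⁻¹

lemma kleinInvolution_involutive (n : ℕ) : Function.Involutive (kleinInvolution n) := by
  intro u
  funext i
  unfold kleinInvolution
  split_ifs <;> simp

lemma kleinRel_iff {n : ℕ} {u v : Fin n → Circle} :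
    kleinRel n u v ↔ v = kleinInvolution n u := by
  simp only [kleinRel, kleinInvolution, funext_iff, Circle.ext_iff]
  congr! with i
  split_ifs <;> simp [Circle.coe_inv_eq_conj, -Circle.coe_inv]

noncomputable def bottInvolution {n : ℕ} (A : Fin n → Fin n → Bool) (i : Fin n)
    (z : Fin n → Circle) (j : Fin n) : Circle :=
  if j = i then -z j else if A i j then (z j)⁻¹ else z j

lemma bottRel_iff {n : ℕ} {A : Fin n → Fin n → Bool} {z w : Fin n → Circle} :
    bottRel n A z w ↔ ∃ i, w = bottInvolution A i z := by
  simp only [bottRel, bottInvolution, funext_iff, Circle.ext_iff]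
  congr! with i j
  split_ifs <;> simp [Circle.coe_inv_eq_conj, -Circle.coe_inv]

namespace BottManifold

variable {n : ℕ} {A : Fin n → Fin n → Bool}

lemma mk_eq_mk_neg_on {s : Finset (Fin n)} (hs : ∀ i ∈ s, ∀ j, A i j = false)
    (z : Fin n → Circle) :
    Quot.mk (bottRel n A) z = Quot.mk _ fun j => if j ∈ s then -z j else z j := by
  classical
  induction s using Finset.induction_on with
  | empty => simp
  | insert a s ha ih =>
    rw [ih fun i hi => hs i (Finset.mem_insert_of_mem hi)]
    refine Quot.sound (bottRel_iff.2 ⟨a, funext fun j => ?_⟩)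
    by_cases hj : j = a
    · subst hj
      simp [bottInvolution, ha]
    · simp [bottInvolution, hj, hs a (Finset.mem_insert_self a s)]

lemma mk_eq_mk_of_eq_or_eq_neg {z w : Fin n → Circle}
    (h : ∀ j, w j = z j ∨ (w j = -z j ∧ ∀ k, A j k = false)) :
    Quot.mk (bottRel n A) z = Quot.mk _ w := by
  classical
  convert mk_eq_mk_neg_on (s := {j | w j ≠ z j}) (fun i hi => ?_) z using 2
  · funext j
    rcases h j with hj | ⟨hj, -⟩
    · simp [hj]
    · simp [hj, Circle.neg_ne_self]
  · simp only [Finset.mem_filter, Finset.mem_univ, true_and] at hi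
    exact ((h i).resolve_left hi).2

end BottManifold

def kleinBottMatrix (n : ℕ) (i j : Fin n) : Bool :=
  decide ((i : ℕ) = 0 ∧ 1 ≤ (j : ℕ))

noncomputable def kleinCover (n : ℕ) (z : Fin n → Circle) (i : Fin n) : Circle :=
  z i.rev ^ if (i : ℕ) = n - 1 then 1 else 2

lemma isQuotientMap_kleinCover (n : ℕ) : IsQuotientMap (kleinCover n) := by
  refine .of_surjective_continuous (fun u => ?_) (by unfold kleinCover; fun_prop)
  choose c hc using fun i : Fin n => Circle.pow_surjective
    (m := if (i : ℕ) = n - 1 then 1 else 2) (by split_ifs <;> norm_num) (u i)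
  exact ⟨fun k => c k.rev, funext fun i => by simpa [kleinCover] using hc i⟩

section kleinCover

variable {n : ℕ} {z w : Fin n → Circle}

lemma kleinCover_bottInvolution_of_val_eq_zero {i : Fin n} (hi : (i : ℕ) = 0)
    (z : Fin n → Circle) :
    kleinCover n (bottInvolution (kleinBottMatrix n) i z) = kleinInvolution n (kleinCover n z) := by
  funext k
  by_cases hk : (k : ℕ) = n - 1
  · have hki : k.rev = i := Fin.ext (by rw [hi, Fin.val_rev_eq_zero_iff, hk])
    simp [kleinCover, kleinInvolution, bottInvolution, hk, hki]
  · have hki : (k.rev : ℕ) ≠ 0 := by rwa [Ne, Fin.val_rev_eq_zero_iff]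
    have hki' : k.rev ≠ i := fun h => hki (h ▸ hi)
    simp only [kleinCover, kleinInvolution, bottInvolution, kleinBottMatrix, hk, hki', hi,
      Nat.one_le_iff_ne_zero.2 hki, if_false, and_self, decide_true, if_true, inv_pow]

lemma kleinCover_bottInvolution_of_val_ne_zero {i : Fin n} (hi : (i : ℕ) ≠ 0)
    (z : Fin n → Circle) :
    kleinCover n (bottInvolution (kleinBottMatrix n) i z) = kleinCover n z := by
  funext k
  by_cases hki : k.rev = i
  · have hk : (k : ℕ) ≠ n - 1 := by rwa [Ne, ← Fin.val_rev_eq_zero_iff, hki]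
    simp [kleinCover, bottInvolution, hk, hki]
  · simp [kleinCover, bottInvolution, kleinBottMatrix, hki, hi]

lemma eq_or_eq_neg_of_kleinCover_eq (h : kleinCover n z = kleinCover n w) (j : Fin n) :
    w j = z j ∨ (w j = -z j ∧ (j : ℕ) ≠ 0) := by
  have hj := congrFun h j.rev
  by_cases hj0 : (j : ℕ) = 0
  · have : (j.rev : ℕ) = n - 1 := by rwa [← Fin.val_rev_eq_zero_iff, Fin.rev_rev]
    simp_all [kleinCover]
  · have : (j.rev : ℕ) ≠ n - 1 := by rwa [Ne, ← Fin.val_rev_eq_zero_iff, Fin.rev_rev]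
    simp only [kleinCover, Fin.rev_rev, this, if_false] at hj
    rcases Circle.sq_eq_sq_iff.1 hj.symm with hw | hw
    exacts [Or.inl hw, Or.inr ⟨hw, hj0⟩]

lemma kleinCover_mk_eq_mk_of_bottRel (h : bottRel n (kleinBottMatrix n) z w) :
    Quot.mk (kleinRel n) (kleinCover n z) = Quot.mk _ (kleinCover n w) := by
  obtain ⟨i, rfl⟩ := bottRel_iff.1 h
  by_cases hi : (i : ℕ) = 0
  · exact Quot.sound (kleinRel_iff.2 (kleinCover_bottInvolution_of_val_eq_zero hi z))
  · rw [kleinCover_bottInvolution_of_val_ne_zero hi]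

lemma bott_mk_eq_mk_of_kleinCover_eq (h : kleinCover n z = kleinCover n w) :
    Quot.mk (bottRel n (kleinBottMatrix n)) z = Quot.mk _ w :=
  BottManifold.mk_eq_mk_of_eq_or_eq_neg fun j =>
    (eq_or_eq_neg_of_kleinCover_eq h j).imp_right fun ⟨hw, hj⟩ =>
      ⟨hw, fun k => by simp [kleinBottMatrix, hj]⟩

lemma bott_mk_eq_mk_of_kleinCover_mk_eq_mk
    (h : Quot.mk (kleinRel n) (kleinCover n z) = Quot.mk _ (kleinCover n w)) :
    Quot.mk (bottRel n (kleinBottMatrix n)) z = Quot.mk _ w := by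
  obtain _ | n := n
  · exact congrArg _ (Subsingleton.elim z w)
  rcases ((kleinInvolution_involutive _).quot_mk_eq_mk_iff fun _ _ => kleinRel_iff).1 h with h | h
  · exact bott_mk_eq_mk_of_kleinCover_eq h.symm
  · rw [← kleinCover_bottInvolution_of_val_eq_zero (i := 0) rfl] at h
    exact (Quot.sound (bottRel_iff.2 ⟨0, rfl⟩)).trans (bott_mk_eq_mk_of_kleinCover_eq h.symm)

end kleinCover

noncomputable def bottManifoldKleinHomeomorph (n : ℕ) :
    BottManifold n (kleinBottMatrix n) ≃ₜ Klein n :=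
  (isQuotientMap_kleinCover n).quotHomeomorph (fun _ _ => kleinCover_mk_eq_mk_of_bottRel)
    fun _ _ => bott_mk_eq_mk_of_kleinCover_mk_eq_mk

theorem bottManifold_homeomorph_klein_general (n : ℕ)
    (B : Fin n → Fin n → Bool)
    (hB : ∀ i j : Fin n, B i j = decide ((i : ℕ) = 0 ∧ 1 ≤ (j : ℕ))) :
    Nonempty (BottManifold n B ≃ₜ Klein n) := by
  obtain rfl : B = kleinBottMatrix n := funext₂ hB
  exact ⟨bottManifoldKleinHomeomorph n⟩

/-- For `n ≥ 2`, the real Bott manifold of the Bott matrix `B` whose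
first row is `(0,1,1,…,1)` and whose other rows vanish is homeomorphic to the
`n`-dimensional Klein bottle `K_n`. -/
theorem bottManifold_homeomorph_klein (n : ℕ) (hn : 2 ≤ n)
    (B : Fin n → Fin n → Bool)
    (hB : ∀ i j : Fin n, B i j = decide ((i : ℕ) = 0 ∧ 1 ≤ (j : ℕ))) :
    Nonempty (BottManifold n B ≃ₜ Klein n) :=
  bottManifold_homeomorph_klein_general n B hB
end

section
/- Let n ≥ 2. The n-dimensional Klein bottle K_n is homeomorphic to the twisted product S¹ ×_{ℤ/2} (ℝP¹)^{n−1}, i.e., to the quotient of S¹ × (ℝP¹)^{n−1} by the free involution (z, [w₂],…,[w_n]) ↦ (−z, [w̄₂],…,[w̄_n]), where ℝP¹ is realized as the quotient of the unit circle S¹ ⊂ ℂ by the antipodal identification w ~ −w and [w] denotes the class of w. -/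
open Complex

/-- Complex conjugation on the unit circle. -/
noncomputable def conjCircle (z : Circle) : Circle :=
  ⟨(starRingEnd ℂ) (z : ℂ), by
    have h := z.2
    simp only [Submonoid.unitSphere, Submonoid.mem_mk, Subsemigroup.mem_mk,
      mem_sphere_zero_iff_norm] at h ⊢
    simp [h]⟩

/-- `ℝP¹`, realized as the quotient of the unit circle `S¹ ⊂ ℂ` by the antipodal
identification `w ~ −w`. -/
def RP1 : Type := Quot (fun w v : Circle => (v : ℂ) = -(w : ℂ))

noncomputable instance : TopologicalSpace RP1 := by unfold RP1; infer_instance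

/-- Complex conjugation descends to an involution `[w] ↦ [w̄]` of `ℝP¹`. -/
noncomputable def RP1.conj : RP1 → RP1 :=
  Quot.lift (fun w => Quot.mk _ (conjCircle w)) (by
    intro a b hab
    apply Quot.sound
    show (conjCircle b : ℂ) = -(conjCircle a : ℂ)
    simp [conjCircle, hab])

/-- The relation on `S¹ × (ℝP¹)^{n−1}` generating the twisting involution
`(z, [w₂],…,[w_n]) ↦ (−z, [w̄₂],…,[w̄_n])`. -/
noncomputable def twistRel (n : ℕ) (x y : Circle × (Fin (n - 1) → RP1)) : Prop :=
  (y.1 : ℂ) = -(x.1 : ℂ) ∧ ∀ i, y.2 i = RP1.conj (x.2 i)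

/-- The twisted product `S¹ ×_{ℤ/2} (ℝP¹)^{n−1}`. -/
noncomputable def TwistedProd (n : ℕ) : Type := Quot (twistRel n)

noncomputable instance (n : ℕ) : TopologicalSpace (TwistedProd n) := by
  unfold TwistedProd; infer_instance

/-! Squaring `[w] ↦ w²` is a homeomorphism `ℝP¹ ≃ₜ S¹` which turns `[w] ↦ [w̄]` into
conjugation `u ↦ ū = u⁻¹` on `S¹`. Moving the last coordinate of the torus to the front and
replacing the others by their square roots therefore gives a homeomorphism
`(S¹)ⁿ ≃ₜ S¹ × (ℝP¹)ⁿ⁻¹` that carries the Klein relation exactly onto the twisting relation,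
so it descends to the quotients. -/

instance : CompactSpace RP1 := by unfold RP1; exact Quot.compactSpace

lemma conjCircle_eq_inv (z : Circle) : conjCircle z = z⁻¹ :=
  Circle.ext (Circle.coe_inv_eq_conj z).symm

namespace RP1

noncomputable def sq : RP1 → Circle :=
  Quot.lift (fun w => w * w) fun a b h => Circle.ext <| by
    simp only [Circle.coe_mul, h, neg_mul_neg]

lemma sq_mk (w : Circle) : sq (Quot.mk _ w) = w * w := rfl

lemma continuous_sq : Continuous sq :=
  continuous_quot_lift _ (continuous_id.mul continuous_id)

lemma sq_injective : Function.Injective sq := by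
  rintro ⟨x⟩ ⟨y⟩ h
  rcases mul_self_eq_mul_self_iff.mp (congrArg ((↑) : Circle → ℂ) h) with h | h
  · exact congrArg _ (Circle.ext h)
  · exact (Quot.sound (r := fun w v : Circle => (v : ℂ) = -(w : ℂ)) h).symm

lemma sq_surjective : Function.Surjective sq := fun z =>
  ⟨Quot.mk _ (Circle.exp (arg z / 2)), by
    rw [sq_mk, ← Circle.exp_add, add_halves, Circle.exp_arg]⟩

noncomputable def homeomorphCircle : RP1 ≃ₜ Circle :=
  (Equiv.ofBijective sq ⟨sq_injective, sq_surjective⟩).toHomeomorphOfContinuousClosed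
    continuous_sq continuous_sq.isClosedMap

lemma homeomorphCircle_conj (p : RP1) : homeomorphCircle p.conj = (homeomorphCircle p)⁻¹ := by
  induction p using Quot.ind with
  | mk w =>
    change sq (Quot.mk _ (conjCircle w)) = (sq (Quot.mk _ w))⁻¹
    rw [sq_mk, sq_mk, conjCircle_eq_inv, mul_inv]

lemma homeomorphCircle_symm_inv (u : Circle) :
    homeomorphCircle.symm u⁻¹ = (homeomorphCircle.symm u).conj :=
  homeomorphCircle.symm_apply_eq.mpr <| by
    rw [homeomorphCircle_conj, Homeomorph.apply_symm_apply]

end RP1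

def Fin.snocHomeomorph {n : ℕ} (α : Fin (n + 1) → Type*) [∀ i, TopologicalSpace (α i)] :
    α (Fin.last n) × (∀ i, α (Fin.castSucc i)) ≃ₜ ∀ i, α i where
  toEquiv := Fin.snocEquiv α
  continuous_toFun := continuous_snd.finSnoc continuous_fst
  continuous_invFun := (continuous_apply _).prodMk (continuous_pi fun _ => continuous_apply _)

noncomputable def torusHomeomorphCircleProdRP1 (m : ℕ) :
    (Fin (m + 1) → Circle) ≃ₜ Circle × (Fin m → RP1) :=
  (Fin.snocHomeomorph fun _ => Circle).symm.trans <|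
    (Homeomorph.refl Circle).prodCongr (Homeomorph.piCongrRight fun _ => RP1.homeomorphCircle.symm)

lemma torusHomeomorphCircleProdRP1_apply (m : ℕ) (z : Fin (m + 1) → Circle) :
    torusHomeomorphCircleProdRP1 m z =
      (z (Fin.last m), fun i => RP1.homeomorphCircle.symm (z i.castSucc)) :=
  rfl

lemma kleinRel_iff_twistRel (m : ℕ) (z w : Fin (m + 1) → Circle) :
    kleinRel (m + 1) z w ↔
      twistRel (m + 1) (torusHomeomorphCircleProdRP1 m z) (torusHomeomorphCircleProdRP1 m w) := by
  rw [torusHomeomorphCircleProdRP1_apply, torusHomeomorphCircleProdRP1_apply, kleinRel, twistRel,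
    Fin.forall_fin_succ', and_comm]
  refine and_congr (by simp) (forall_congr' fun i => ?_)
  dsimp only
  rw [← RP1.homeomorphCircle_symm_inv, EquivLike.apply_eq_iff_eq, Circle.ext_iff,
    Circle.coe_inv_eq_conj, Fin.val_castSucc, if_neg (by omega)]

/-- For `n ≥ 2`, the `n`-dimensional Klein bottle is homeomorphic to the
twisted product `S¹ ×_{ℤ/2} (ℝP¹)^{n−1}`. -/
theorem klein_homeomorph_twistedProd (n : ℕ) (hn : 2 ≤ n) :
    Nonempty (Klein n ≃ₜ TwistedProd n) := by
  obtain ⟨m, rfl⟩ : ∃ m, n = m + 1 := ⟨n - 1, by omega⟩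
  exact ⟨Homeomorph.Quot.congr _ (kleinRel_iff_twistRel m)⟩
end

section
/- Let n ≥ 2. The n-dimensional Klein bottle K_n is homeomorphic to the small cover X(Iⁿ, χ), i.e., to the quotient ((𝔽₂ⁿ) × [−1,1]ⁿ)/~, where (t,p) ~ (u,p) whenever t + u lies in the subgroupของ 𝔽₂ⁿ generated by {c_j : p ∈ F_j, 1 ≤ j ≤ 2n}. -/
open Complex

/-- The cube `Iⁿ = [−1,1]ⁿ`. -/
abbrev Cube (n : ℕ) : Type := Fin n → (Set.Icc (-1 : ℝ) 1)

/-- The columns `c₁, …, c_{2n}` of the characteristic matrix `χ` (indexed from `0`):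
`c_j = e_j` for `1 ≤ j ≤ n`, `c_{n+1} = e₁ + ⋯ + e_n`, and `c_{n+i} = e_i` for `2 ≤ i ≤ n`. -/
def cubeCol (n : ℕ) (j : Fin (2 * n)) : Fin n → ZMod 2 :=
  if h : (j : ℕ) < n then Pi.single ⟨(j : ℕ), h⟩ 1
  else if (j : ℕ) = n then (fun _ => 1)
  else Pi.single ⟨(j : ℕ) - n, by have := j.2; omega⟩ 1

/-- Membership of a point of the cube in the facet `F_j`, where `F_i = {x : x_i = −1}` and
`F_{n+i} = {x : x_i = 1}` for `1 ≤ i ≤ n`. -/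
def cubeFacetMem (n : ℕ) (p : Cube n) (j : Fin (2 * n)) : Prop :=
  if h : (j : ℕ) < n then (p ⟨(j : ℕ), h⟩ : ℝ) = -1
  else (p ⟨(j : ℕ) - n, by have := j.2; omega⟩ : ℝ) = 1

/-- The small cover relation on `𝔽₂ⁿ × Iⁿ`: `(t,p) ~ (u,q)` iff `p = q` and `t + u` lies in
the subgroup of `𝔽₂ⁿ` generated by the columns `c_j` over all facets `F_j` containing `p`. -/
def smallCoverRel (n : ℕ) (x y : (Fin n → ZMod 2) × Cube n) : Prop :=
  x.2 = y.2 ∧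
    x.1 + y.1 ∈ Submodule.span (ZMod 2)
      {v | ∃ j : Fin (2 * n), cubeFacetMem n x.2 j ∧ v = cubeCol n j}

/-- The small cover `X(Iⁿ, χ)`. -/
def SmallCoverCube (n : ℕ) : Type := Quot (smallCoverRel n)

instance (n : ℕ) : TopologicalSpace (SmallCoverCube n) := by
  unfold SmallCoverCube; infer_instance

/-!
`K_n` is the quotient of the torus by a continuous involution `σ`, hence compact Hausdorff, so it
suffices to find a continuous bijection `X(Iⁿ, χ) → K_n`. Reindex cyclically so that the special
cube coordinate `0` (the one whose facet `x₀ = 1` has column `e₁ + ⋯ + eₙ`) matches the last torus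
coordinate, on which `σ` acts by `z ↦ -z`. Send `(ε, x)` to the torus point whose `k`-th
coordinate is the unit complex number with real part `x_k`, or `(1 - x₀)/2` for `k = 0`, and with
imaginary part of sign `(-1)^{ε_k}`. Flipping `ε_k` leaves this point unchanged exactly when `x`
lies on a facet with column `e_k` (the real part is `±1`), and flipping every sign at `x₀ = 1` is
`σ`; so the map descends to the quotients, and reading off real parts and signs inverts it on the
half-torus `Re z_n ≥ 0`, which meets every `σ`-orbit.
-/

section InvolutionQuotient

variable {X : Type*} {σ : X → X} {r : X → X → Prop}

theorem Quot.mk_eq_mk_iff_of_involutive (hσ : Function.Involutive σ)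
    (hr : ∀ x y, r x y ↔ y = σ x) {x y : X} :
    Quot.mk r x = Quot.mk r y ↔ y = x ∨ y = σ x := by
  rw [Quot.eq]
  refine ⟨fun h => ?_, ?_⟩
  · induction h with
    | rel x y hxy => exact .inr ((hr x y).mp hxy)
    | refl => exact .inl rfl
    | symm x y _ ih => rcases ih with rfl | rfl <;> simp [hσ x]
    | trans x y z _ _ ihxy ihyz =>
      rcases ihxy with rfl | rfl <;> rcases ihyz with rfl | rfl <;> simp [hσ x]
  · rintro (rfl | rfl)
    exacts [.refl _, .rel _ _ ((hr _ _).mpr rfl)]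

variable [TopologicalSpace X]

theorem isOpenQuotientMap_quot_mk_of_involutive (hσ : Function.Involutive σ) (hσc : Continuous σ)
    (hr : ∀ x y, r x y ↔ y = σ x) : IsOpenQuotientMap (Quot.mk r) := by
  refine ⟨Quot.mk_surjective, continuous_quot_mk, fun U hU => ?_⟩
  have hsat : Quot.mk r ⁻¹' (Quot.mk r '' U) = U ∪ σ ⁻¹' U := by
    ext y
    simp only [Set.mem_preimage, Set.mem_image, Set.mem_union,
      Quot.mk_eq_mk_iff_of_involutive hσ hr]
    constructor
    · rintro ⟨x, hx, rfl | rfl⟩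
      exacts [.inl hx, .inr (by rwa [hσ x])]
    · rintro (hy | hy)
      exacts [⟨y, hy, .inl rfl⟩, ⟨σ y, hy, .inr (hσ y).symm⟩]
  exact isQuotientMap_quot_mk.isOpen_preimage.mp (hsat ▸ hU.union (hU.preimage hσc))

theorem t2Space_quot_of_involutive [T2Space X] (hσ : Function.Involutive σ) (hσc : Continuous σ)
    (hr : ∀ x y, r x y ↔ y = σ x) : T2Space (Quot r) := by
  rw [t2Space_iff_of_isOpenQuotientMap (isOpenQuotientMap_quot_mk_of_involutive hσ hσc hr)]
  simp only [Quot.mk_eq_mk_iff_of_involutive hσ hr, Set.ofPred_or]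
  exact (isClosed_eq continuous_snd continuous_fst).union
    (isClosed_eq continuous_snd (hσc.comp continuous_fst))

end InvolutionQuotient

lemma finRotate_eq_zero_iff {n : ℕ} [NeZero n] (i : Fin n) :
    finRotate n i = 0 ↔ (i : ℕ) = n - 1 := by
  obtain ⟨m, rfl⟩ : ∃ m, n = m + 1 := ⟨n - 1, (Nat.succ_pred_eq_of_ne_zero (NeZero.ne n)).symm⟩
  rw [Fin.ext_iff, coe_finRotate, Fin.val_zero, Nat.add_sub_cancel]
  split_ifs with h
  · simp [h]
  · simp only [false_iff]
    exact fun h' => h (Fin.ext h')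

namespace Klein

noncomputable def involution (n : ℕ) (z : Fin n → Circle) : Fin n → Circle :=
  fun i => if (i : ℕ) = n - 1 then -z i else (z i)⁻¹

variable {n : ℕ}

lemma involution_involutive : Function.Involutive (involution n) := by
  intro z
  funext i
  unfold involution
  split_ifs <;> simp

lemma continuous_involution : Continuous (involution n) :=
  continuous_pi fun i => by
    unfold involution
    split_ifs
    exacts [(continuous_apply i).neg, (continuous_apply i).inv]

lemma kleinRel_iff_eq_involution {z w : Fin n → Circle} : kleinRel n z w ↔ w = involution n z := by
  simp only [kleinRel, funext_iff, involution, Circle.ext_iff]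
  refine forall_congr' fun i => ?_
  split_ifs <;> simp only [Circle.coe_neg, Circle.coe_inv_eq_conj]

lemma mk_eq_mk_iff {z w : Fin n → Circle} :
    (Quot.mk _ z : Klein n) = Quot.mk _ w ↔ w = z ∨ w = involution n z :=
  Quot.mk_eq_mk_iff_of_involutive involution_involutive fun _ _ => kleinRel_iff_eq_involution

instance : T2Space (Klein n) :=
  t2Space_quot_of_involutive involution_involutive continuous_involution
    fun _ _ => kleinRel_iff_eq_involution

lemma involution_apply_of_finRotate_eq_zero [NeZero n] {i : Fin n} (hi : finRotate n i = 0)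
    (z : Fin n → Circle) : involution n z i = -z i :=
  if_pos ((finRotate_eq_zero_iff i).mp hi)

lemma involution_apply_of_finRotate_ne_zero [NeZero n] {i : Fin n} (hi : finRotate n i ≠ 0)
    (z : Fin n → Circle) : involution n z i = (z i)⁻¹ :=
  if_neg (mt (finRotate_eq_zero_iff i).mpr hi)

end Klein

open Real

lemma Circle.abs_re_le_one (w : Circle) : |(w : ℂ).re| ≤ 1 :=
  Circle.norm_coe w ▸ Complex.abs_re_le_norm w

lemma ZMod.eq_zero_or_eq_one_of_two (e : ZMod 2) : e = 0 ∨ e = 1 := by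
  revert e; decide

def zmodSign (e : ZMod 2) : ℝ := if e = 0 then 1 else -1

lemma zmodSign_add_one (e : ZMod 2) : zmodSign (e + 1) = -zmodSign e := by
  rcases ZMod.eq_zero_or_eq_one_of_two e with rfl | rfl <;> simp +decide [zmodSign]

noncomputable def arcPoint (e : ZMod 2) (r : ℝ) : Circle := Circle.exp (zmodSign e * arccos r)

lemma continuous_arcPoint (e : ZMod 2) : Continuous (arcPoint e) :=
  (map_continuous Circle.exp).comp (continuous_const.mul continuous_arccos)

lemma re_arcPoint (e : ZMod 2) {r : ℝ} (h₁ : -1 ≤ r) (h₂ : r ≤ 1) :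
    (arcPoint e r : ℂ).re = r := by
  rw [arcPoint, Circle.coe_exp, Complex.exp_ofReal_mul_I_re]
  rcases ZMod.eq_zero_or_eq_one_of_two e with rfl | rfl <;>
    simp +decide [zmodSign, cos_arccos h₁ h₂]

lemma im_arcPoint (e : ZMod 2) (r : ℝ) : (arcPoint e r : ℂ).im = zmodSign e * √(1 - r ^ 2) := by
  rw [arcPoint, Circle.coe_exp, Complex.exp_ofReal_mul_I_im]
  rcases ZMod.eq_zero_or_eq_one_of_two e with rfl | rfl <;>
    simp +decide [zmodSign, sin_arccos]

lemma arcPoint_add_one (e : ZMod 2) (r : ℝ) : arcPoint (e + 1) r = (arcPoint e r)⁻¹ := by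
  rw [arcPoint, zmodSign_add_one, neg_mul, Circle.exp_neg, arcPoint]

lemma arcPoint_add_one_of_sq_eq_one (e : ZMod 2) {r : ℝ} (hr : r ^ 2 = 1) :
    arcPoint (e + 1) r = arcPoint e r := by
  have h₁ : -1 ≤ r := by nlinarith
  have h₂ : r ≤ 1 := by nlinarith
  ext1; apply Complex.ext
  · rw [re_arcPoint _ h₁ h₂, re_arcPoint _ h₁ h₂]
  · simp [im_arcPoint, hr]

lemma arcPoint_add_one_zero (e : ZMod 2) : arcPoint (e + 1) 0 = -arcPoint e 0 := by
  ext1; apply Complex.ext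
  · simp [re_arcPoint]
  · simp [im_arcPoint, zmodSign_add_one]

noncomputable def imSignBit (w : Circle) : ZMod 2 := if (w : ℂ).im < 0 then 1 else 0

lemma arcPoint_imSignBit_re (w : Circle) : arcPoint (imSignBit w) (w : ℂ).re = w := by
  have hsq : (w : ℂ).re ^ 2 + (w : ℂ).im ^ 2 = 1 := by
    simpa [Complex.normSq_apply, sq] using Circle.normSq_coe w
  have hre := Circle.abs_re_le_one w
  ext1; apply Complex.ext
  · exact re_arcPoint _ (abs_le.mp hre).1 (abs_le.mp hre).2
  · rw [im_arcPoint, show 1 - (w : ℂ).re ^ 2 = (w : ℂ).im ^ 2 by linarith, sqrt_sq_eq_abs,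
      imSignBit]
    split_ifs with h
    · simp [zmodSign, abs_of_neg h]
    · simp [zmodSign, abs_of_nonneg (not_lt.mp h)]

lemma imSignBit_arcPoint (e : ZMod 2) {r : ℝ} (hr : r ^ 2 < 1) :
    imSignBit (arcPoint e r) = e := by
  have hpos : 0 < √(1 - r ^ 2) := sqrt_pos.mpr (by linarith)
  rw [imSignBit, im_arcPoint]
  rcases ZMod.eq_zero_or_eq_one_of_two e with rfl | rfl <;>
    simp +decide [zmodSign, hpos, hpos.le]

namespace SmallCoverCube

variable {n : ℕ}

instance : CompactSpace (SmallCoverCube n) :=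
  inferInstanceAs (CompactSpace (Quot (smallCoverRel n)))

abbrev facetSpan (x : Cube n) : Submodule (ZMod 2) (Fin n → ZMod 2) :=
  Submodule.span (ZMod 2) {v | ∃ j : Fin (2 * n), cubeFacetMem n x j ∧ v = cubeCol n j}

variable [NeZero n]

/-- `x` lies on `F_k`, or on `F_{n+k}` with `k ≠ 0`: the facets whose column is `e_k`. -/
def OnBasisFacet (x : Cube n) (k : Fin n) : Prop :=
  (x k : ℝ) = -1 ∨ (k ≠ 0 ∧ (x k : ℝ) = 1)

lemma cubeCol_eq_single_or_eq_one {x : Cube n} {j : Fin (2 * n)} (h : cubeFacetMem n x j) :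
    (∃ k, OnBasisFacet x k ∧ cubeCol n j = Pi.single k 1) ∨ ((x 0 : ℝ) = 1 ∧ cubeCol n j = 1) := by
  unfold cubeFacetMem at h
  unfold cubeCol
  split_ifs at h ⊢ with hj hjn
  · exact .inl ⟨_, .inl h, rfl⟩
  · right
    refine ⟨?_, rfl⟩
    rwa [show (⟨(j : ℕ) - n, _⟩ : Fin n) = 0 from Fin.ext (by simp [hjn])] at h
  · refine .inl ⟨_, .inr ⟨fun h0 => ?_, h⟩, rfl⟩
    have : (j : ℕ) - n = 0 := by simpa using Fin.val_eq_of_eq h0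
    omega

lemma single_mem_facetSpan {x : Cube n} {k : Fin n} (hk : OnBasisFacet x k) :
    Pi.single k 1 ∈ facetSpan x := by
  apply Submodule.subset_span
  have hk2 : (k : ℕ) < 2 * n := by omega
  rcases hk with hk | ⟨hk0, hk⟩
  · exact ⟨⟨k, hk2⟩, by simpa [cubeFacetMem] using hk, by simp [cubeCol]⟩
  · have hk0' : (k : ℕ) ≠ 0 := fun h => hk0 (Fin.ext h)
    refine ⟨⟨n + k, by omega⟩, ?_, ?_⟩
    · simpa [cubeFacetMem] using hk
    · simp [cubeCol, hk0']

lemma one_mem_facetSpan {x : Cube n} (hx : (x 0 : ℝ) = 1) : 1 ∈ facetSpan x := by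
  apply Submodule.subset_span
  refine ⟨⟨n, by have := NeZero.pos n; omega⟩, ?_, ?_⟩
  · simpa [cubeFacetMem] using hx
  · rw [cubeCol, dif_neg (lt_irrefl n), if_pos rfl]
    rfl

lemma mem_facetSpan_of_support {x : Cube n} {d : Fin n → ZMod 2}
    (hd : ∀ k, d k ≠ 0 → OnBasisFacet x k) : d ∈ facetSpan x := by
  rw [← Finset.univ_sum_single d]
  refine Submodule.sum_mem _ fun k _ => ?_
  rcases ZMod.eq_zero_or_eq_one_of_two (d k) with h | h
  · simp [h]
  · rw [h]
    exact single_mem_facetSpan (hd k (by simp [h]))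

noncomputable def cubeRe (k : Fin n) (t : ℝ) : ℝ := if k = 0 then (1 - t) / 2 else t

noncomputable def reToCube (k : Fin n) (r : ℝ) : ℝ := if k = 0 then 1 - 2 * |r| else r

lemma continuous_cubeRe (k : Fin n) : Continuous (cubeRe k) := by
  unfold cubeRe; split_ifs <;> fun_prop

lemma cubeRe_mem_Icc (k : Fin n) (t : Set.Icc (-1 : ℝ) 1) :
    -1 ≤ cubeRe k t ∧ cubeRe k t ≤ 1 := by
  have := t.2
  unfold cubeRe; split_ifs <;> constructor <;> linarith [this.1, this.2]

lemma reToCube_mem_Icc (k : Fin n) {r : ℝ} (hr : |r| ≤ 1) : reToCube k r ∈ Set.Icc (-1) 1 := by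
  have := abs_nonneg r
  unfold reToCube; split_ifs <;> constructor <;> linarith [abs_le.mp hr]

lemma reToCube_cubeRe (k : Fin n) (t : Set.Icc (-1 : ℝ) 1) : reToCube k (cubeRe k t) = t := by
  unfold reToCube cubeRe
  split_ifs
  · rw [abs_of_nonneg (by linarith [t.2.2])]; ring
  · rfl

lemma cubeRe_reToCube {k : Fin n} {r : ℝ} (hr : k = 0 → 0 ≤ r) : cubeRe k (reToCube k r) = r := by
  unfold reToCube cubeRe
  split_ifs with hk
  · rw [abs_of_nonneg (hr hk)]; ring
  · rfl

lemma onBasisFacet_iff {x : Cube n} {k : Fin n} : OnBasisFacet x k ↔ cubeRe k (x k) ^ 2 = 1 := by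
  have := (x k).2
  unfold OnBasisFacet cubeRe
  split_ifs with hk
  · constructor
    · rintro (h | ⟨h, -⟩)
      · rw [h]; norm_num
      · exact absurd hk h
    · intro h; left; nlinarith [this.1, this.2]
  · rw [sq, mul_self_eq_one_iff]
    simp only [hk, ne_eq, not_false_eq_true, true_and]
    exact or_comm

noncomputable def cubePoint (p : (Fin n → ZMod 2) × Cube n) (k : Fin n) : Circle :=
  arcPoint (p.1 k) (cubeRe k (p.2 k))

noncomputable def cubeToTorus (p : (Fin n → ZMod 2) × Cube n) : Fin n → Circle :=
  cubePoint p ∘ finRotate n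

noncomputable def torusToCube (z : Fin n → Circle) : (Fin n → ZMod 2) × Cube n :=
  (fun k => imSignBit (z ((finRotate n).symm k)),
   fun k => ⟨reToCube k (z ((finRotate n).symm k) : ℂ).re,
     reToCube_mem_Icc k (Circle.abs_re_le_one _)⟩)

lemma cubeToTorus_finRotate_symm (p : (Fin n → ZMod 2) × Cube n) (k : Fin n) :
    cubeToTorus p ((finRotate n).symm k) = cubePoint p k := by
  simp [cubeToTorus]

lemma continuous_cubeToTorus : Continuous (cubeToTorus (n := n)) :=
  continuous_prod_of_discrete_left.mpr fun _ => continuous_pi fun _ =>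
    (continuous_arcPoint _).comp <| (continuous_cubeRe _).comp <|
      continuous_subtype_val.comp (continuous_apply _)

lemma cubeToTorus_torusToCube {z : Fin n → Circle}
    (hz : 0 ≤ (z ((finRotate n).symm 0) : ℂ).re) : cubeToTorus (torusToCube z) = z := by
  funext i
  obtain ⟨k, rfl⟩ := (finRotate n).symm.surjective i
  rw [cubeToTorus_finRotate_symm, cubePoint]
  dsimp only [torusToCube]
  rw [cubeRe_reToCube (by rintro rfl; exact hz), arcPoint_imSignBit_re]

lemma mk_torusToCube_cubeToTorus (p : (Fin n → ZMod 2) × Cube n) :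
    (Quot.mk _ (torusToCube (cubeToTorus p)) : SmallCoverCube n) = Quot.mk _ p := by
  have hre : ∀ k, (cubePoint p k : ℂ).re = cubeRe k (p.2 k) := fun k =>
    re_arcPoint _ (cubeRe_mem_Icc k _).1 (cubeRe_mem_Icc k _).2
  have hsnd : (torusToCube (cubeToTorus p)).2 = p.2 := by
    funext k
    ext1
    simp only [torusToCube, cubeToTorus_finRotate_symm, hre, reToCube_cubeRe]
  refine Quot.sound ⟨hsnd, ?_⟩
  rw [hsnd]
  refine mem_facetSpan_of_support fun k hk => onBasisFacet_iff.mpr ?_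
  by_contra hsq
  have hlt : cubeRe k (p.2 k) ^ 2 < 1 := by
    have := cubeRe_mem_Icc k (p.2 k)
    exact lt_of_le_of_ne (by nlinarith) hsq
  apply hk
  simp only [torusToCube, cubeToTorus_finRotate_symm, Pi.add_apply, cubePoint,
    imSignBit_arcPoint _ hlt, ZModModule.add_self]

lemma cubeToTorus_add_single {ε : Fin n → ZMod 2} {x : Cube n} {k : Fin n}
    (hk : OnBasisFacet x k) : cubeToTorus (ε + Pi.single k 1, x) = cubeToTorus (ε, x) := by
  funext i
  simp only [cubeToTorus, cubePoint, Function.comp_apply, Pi.add_apply]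
  by_cases hi : finRotate n i = k
  · rw [hi, Pi.single_eq_same, arcPoint_add_one_of_sq_eq_one _ (onBasisFacet_iff.mp hk)]
  · rw [Pi.single_eq_of_ne hi, add_zero]

lemma cubeToTorus_add_one {ε : Fin n → ZMod 2} {x : Cube n} (hx : (x 0 : ℝ) = 1) :
    cubeToTorus (ε + 1, x) = Klein.involution n (cubeToTorus (ε, x)) := by
  funext i
  by_cases hi : finRotate n i = 0
  · rw [Klein.involution_apply_of_finRotate_eq_zero hi]
    simp only [cubeToTorus, cubePoint, Function.comp_apply, Pi.add_apply, Pi.one_apply, hi]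
    rw [cubeRe, if_pos rfl, hx, sub_self, zero_div, arcPoint_add_one_zero]
  · rw [Klein.involution_apply_of_finRotate_ne_zero hi]
    simp only [cubeToTorus, cubePoint, Function.comp_apply, Pi.add_apply, Pi.one_apply]
    rw [arcPoint_add_one]

lemma re_cubeToTorus_finRotate_symm_zero (p : (Fin n → ZMod 2) × Cube n) :
    (cubeToTorus p ((finRotate n).symm 0) : ℂ).re = (1 - p.2 0) / 2 := by
  rw [cubeToTorus_finRotate_symm, cubePoint,
    re_arcPoint _ (cubeRe_mem_Icc 0 _).1 (cubeRe_mem_Icc 0 _).2, cubeRe, if_pos rfl]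

lemma mk_cubeToTorus_add_of_mem_facetSpan {x : Cube n} {v : Fin n → ZMod 2}
    (hv : v ∈ facetSpan x) (ε : Fin n → ZMod 2) :
    (Quot.mk _ (cubeToTorus (ε + v, x)) : Klein n) = Quot.mk _ (cubeToTorus (ε, x)) := by
  induction hv using Submodule.span_induction generalizing ε with
  | mem v hv =>
    obtain ⟨j, hj, rfl⟩ := hv
    rcases cubeCol_eq_single_or_eq_one hj with ⟨k, hk, hcol⟩ | ⟨hx, hcol⟩
    · rw [hcol, cubeToTorus_add_single hk]
    · rw [hcol, cubeToTorus_add_one hx]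
      exact (Klein.mk_eq_mk_iff.mpr (.inr rfl)).symm
  | zero => rw [add_zero]
  | add v w _ _ ihv ihw => rw [← add_assoc, ihw, ihv]
  | smul a v _ ihv =>
    rcases ZMod.eq_zero_or_eq_one_of_two a with rfl | rfl
    · rw [zero_smul, add_zero]
    · rw [one_smul, ihv]

lemma mk_cubeToTorus_eq_of_rel {p q : (Fin n → ZMod 2) × Cube n} (h : smallCoverRel n p q) :
    (Quot.mk _ (cubeToTorus p) : Klein n) = Quot.mk _ (cubeToTorus q) := by
  obtain ⟨ε, x⟩ := p
  obtain ⟨ε', x'⟩ := q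
  obtain ⟨rfl, h⟩ := h
  have := mk_cubeToTorus_add_of_mem_facetSpan h ε'
  rwa [add_left_comm, ZModModule.add_self, add_zero] at this

noncomputable def toKlein : SmallCoverCube n → Klein n :=
  Quot.lift (fun p => Quot.mk _ (cubeToTorus p)) fun _ _ => mk_cubeToTorus_eq_of_rel

lemma continuous_toKlein : Continuous (toKlein (n := n)) :=
  continuous_quot_lift _ (continuous_quot_mk.comp continuous_cubeToTorus)

lemma toKlein_surjective : Function.Surjective (toKlein (n := n)) := by
  rintro ⟨z⟩
  by_cases hz : 0 ≤ (z ((finRotate n).symm 0) : ℂ).re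
  · exact ⟨Quot.mk _ (torusToCube z), congrArg _ (cubeToTorus_torusToCube hz)⟩
  · have hz' : 0 ≤ (Klein.involution n z ((finRotate n).symm 0) : ℂ).re := by
      rw [Klein.involution_apply_of_finRotate_eq_zero (Equiv.apply_symm_apply _ _), Circle.coe_neg,
        Complex.neg_re]
      linarith
    refine ⟨Quot.mk _ (torusToCube (Klein.involution n z)), ?_⟩
    change Quot.mk _ (cubeToTorus (torusToCube _)) = _
    rw [cubeToTorus_torusToCube hz']
    exact (Klein.mk_eq_mk_iff.mpr (.inr rfl)).symm

lemma toKlein_injective : Function.Injective (toKlein (n := n)) := by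
  have of_eq : ∀ p q, cubeToTorus p = cubeToTorus q →
      (Quot.mk _ p : SmallCoverCube n) = Quot.mk _ q := fun p q h => by
    rw [← mk_torusToCube_cubeToTorus p, h, mk_torusToCube_cubeToTorus]
  rintro ⟨p⟩ ⟨q⟩ h
  rcases Klein.mk_eq_mk_iff.mp h with h | h
  · exact of_eq p q h.symm
  · -- the real parts of the last coordinates are `(1 - q₀) / 2 ≥ 0` and `-(1 - p₀) / 2 ≤ 0`
    have hx : (p.2 0 : ℝ) = 1 := by
      have h0 := congrArg (fun z => (z ((finRotate n).symm 0) : ℂ).re) h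
      simp only [Klein.involution_apply_of_finRotate_eq_zero (Equiv.apply_symm_apply _ _),
        Circle.coe_neg, Complex.neg_re, re_cubeToTorus_finRotate_symm_zero] at h0
      linarith [(p.2 0).2.2, (q.2 0).2.2]
    rw [← cubeToTorus_add_one hx] at h
    calc (Quot.mk _ p : SmallCoverCube n) = Quot.mk _ (p.1 + 1, p.2) := Quot.sound ⟨rfl, ?_⟩
      _ = Quot.mk _ q := of_eq _ q h.symm
    rw [← add_assoc, ZModModule.add_self, zero_add]
    exact one_mem_facetSpan hx

end SmallCoverCube

/-- For `n ≥ 2`, the `n`-dimensional Klein bottle `K_n` is homeomorphic to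
the small cover `X(Iⁿ, χ)`. -/
theorem klein_homeomorph_smallCover (n : ℕ) (hn : 2 ≤ n) :
    Nonempty (Klein n ≃ₜ SmallCoverCube n) := by
  have : NeZero n := ⟨by omega⟩
  exact ⟨(SmallCoverCube.continuous_toKlein.homeoOfEquivCompactToT2
    (f := .ofBijective _ ⟨SmallCoverCube.toKlein_injective,
      SmallCoverCube.toKlein_surjective⟩)).symm⟩
end

section
/- Let n ≥ 2 and T ⊆ {1,…,n}. Then |supp(χ_T)| = 2|T| if |T| is even and 1 ∉ T; |supp(χ_T)| = 2|T| − 1 if |T| is even and 1 ∈ T; |supp(χ_T)| = 2|T| if |T| is odd and 1 ∈ T; and |supp(χ_T)| = 2|T| + 1 if |T| is odd and 1 ∉ T. -/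
/-!
The columns of `χ` fall into three blocks. For `j ≤ n` the column sum of `χ_T` at `j` is
`[j ∈ T]`; the column `n + 1` is all ones, so its sum is `|T| mod 2`; and for `k ≥ 2` the
column `n + k` meets only row `k`, so its sum is `[k ∈ T]`. Hence `supp(χ_T)` is the disjoint
union of `T`, of `n + (T \ {1})`, and of `{n + 1}` when `|T|` is odd.
-/

/-- The `(i,j)` entry of the characteristic matrix `χ` of the `n`-Klein bottle (rows and
columns indexed from `1`): row `1` has `1`'s exactly at positions `1` and `n+1`, and for
`2 ≤ i ≤ n` row `i` has `1`'s exactly at positions `i`, `n+1` and `n+i`. -/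
def chiEntry (n i j : ℕ) : ZMod 2 :=
  if j = i ∨ j = n + 1 ∨ j = n + i then 1 else 0

/-- The support of `χ_T = ∑_{i∈T} (row i of χ)`, as a subset of `{1,…,2n}`. -/
def chiSupp (n : ℕ) (T : Finset ℕ) : Finset ℕ :=
  (Finset.Icc 1 (2 * n)).filter (fun j => (∑ i ∈ T, chiEntry n i j) ≠ 0)

open Finset

section

variable {n i j k : ℕ} {T : Finset ℕ}

lemma chiEntry_of_le (hi : 1 ≤ i) (hj : j ≤ n) : chiEntry n i j = if j = i then 1 else 0 := by
  unfold chiEntry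
  exact if_congr (by omega) rfl rfl

lemma chiEntry_succ : chiEntry n i (n + 1) = 1 := by
  simp [chiEntry]

lemma chiEntry_add (hi : i ≤ n) (hk : 2 ≤ k) :
    chiEntry n i (n + k) = if k = i then 1 else 0 := by
  unfold chiEntry
  exact if_congr (by omega) rfl rfl

lemma sum_chiEntry_of_le (hT : ∀ i ∈ T, 1 ≤ i) (hj : j ≤ n) :
    ∑ i ∈ T, chiEntry n i j = if j ∈ T then 1 else 0 := by
  rw [sum_congr rfl fun i hi => chiEntry_of_le (hT i hi) hj, sum_ite_eq]

lemma sum_chiEntry_succ : ∑ i ∈ T, chiEntry n i (n + 1) = #T := by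
  simp [chiEntry_succ]

lemma sum_chiEntry_add (hT : ∀ i ∈ T, i ≤ n) (hk : 2 ≤ k) :
    ∑ i ∈ T, chiEntry n i (n + k) = if k ∈ T then 1 else 0 := by
  rw [sum_congr rfl fun i hi => chiEntry_add (hT i hi) hk, sum_ite_eq]

lemma chiSupp_eq (hT : T ⊆ Icc 1 n) :
    chiSupp n T = T ∪ (T.erase 1).map (addLeftEmbedding n) ∪
      (if Odd #T then {n + 1} else ∅) := by
  have hmem : ∀ i ∈ T, 1 ≤ i ∧ i ≤ n := fun i hi => mem_Icc.mp (hT hi)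
  ext j
  have hcols : j ≤ n ∨ j = n + 1 ∨ ∃ k, 2 ≤ k ∧ j = n + k := by
    rcases le_or_gt j (n + 1) with h | h
    · omega
    · exact Or.inr (Or.inr ⟨j - n, by omega, by omega⟩)
  rcases hcols with hj | rfl | ⟨k, hk, rfl⟩
  · simp only [chiSupp, mem_filter, mem_Icc, sum_chiEntry_of_le (fun i hi => (hmem i hi).1) hj,
      mem_union, mem_map, mem_erase, addLeftEmbedding_apply]
    grind
  · -- the column `n + 1` lies in `Icc 1 (2 * n)` only when `n ≥ 1`
    have hn : Odd #T → 1 ≤ n := fun h => by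
      obtain ⟨i, hi⟩ := card_pos.mp h.pos
      exact (hmem i hi).1.trans (hmem i hi).2
    simp only [chiSupp, mem_filter, mem_Icc, sum_chiEntry_succ, mem_union, mem_map, mem_erase,
      addLeftEmbedding_apply, ZMod.natCast_ne_zero_iff_odd]
    grind
  · simp only [chiSupp, mem_filter, mem_Icc, sum_chiEntry_add (fun i hi => (hmem i hi).2) hk,
      mem_union, mem_map, mem_erase, addLeftEmbedding_apply, add_right_inj]
    grind

lemma card_chiSupp_eq (hT : T ⊆ Icc 1 n) :
    #(chiSupp n T) = #T + #(T.erase 1) + if Odd #T then 1 else 0 := by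
  have hmem : ∀ i ∈ T, 1 ≤ i ∧ i ≤ n := fun i hi => mem_Icc.mp (hT hi)
  have hdisj₁ : Disjoint T ((T.erase 1).map (addLeftEmbedding n)) := by
    simp only [disjoint_left, mem_map, addLeftEmbedding_apply]
    grind
  have hdisj₂ : Disjoint (T ∪ (T.erase 1).map (addLeftEmbedding n))
      (if Odd #T then {n + 1} else ∅) := by
    split_ifs
    · simp only [disjoint_singleton_right, mem_union, mem_map, addLeftEmbedding_apply]
      grind
    · exact disjoint_empty_right _
  rw [chiSupp_eq hT, card_union_of_disjoint hdisj₂, card_union_of_disjoint hdisj₁, card_map,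
    apply_ite card, card_singleton, card_empty]

end

theorem card_chiSupp_general (n : ℕ) (T : Finset ℕ) (hT : T ⊆ Finset.Icc 1 n) :
    (chiSupp n T).card =
      if Even T.card then (if 1 ∈ T then 2 * T.card - 1 else 2 * T.card)
      else (if 1 ∈ T then 2 * T.card else 2 * T.card + 1) := by
  simp only [card_chiSupp_eq hT, ← Nat.not_even_iff_odd]
  by_cases h1 : 1 ∈ T
  · have := card_pos.mpr ⟨1, h1⟩
    simp only [card_erase_of_mem h1, h1, if_true]
    split_ifs <;> omega
  · simp only [erase_eq_of_notMem h1, h1, if_false]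
    split_ifs <;> omega

/-- For `n ≥ 2` and `T ⊆ {1,…,n}`:
`|supp(χ_T)| = 2|T|` if `|T|` is even and `1 ∉ T`; `2|T| − 1` if `|T|` is even and `1 ∈ T`;
`2|T|` if `|T|` is odd and `1 ∈ T`; and `2|T| + 1` if `|T|` is odd and `1 ∉ T`. -/
theorem card_chiSupp (n : ℕ) (hn : 2 ≤ n) (T : Finset ℕ) (hT : T ⊆ Finset.Icc 1 n) :
    (chiSupp n T).card =
      if Even T.card then (if 1 ∈ T then 2 * T.card - 1 else 2 * T.card)
      else (if 1 ∈ T then 2 * T.card else 2 * T.card + 1) :=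
  card_chiSupp_general n T hT
end

section
/- Let n ≥ 2 and let T ⊆ {1,…,n} be nonempty. If |supp(χ_T)| is even (i.e., |T| is even and 1 ∉ T, or |T| is odd and 1 ∈ T), then the geometric realization of the induced subcomplex K_{χ,T} is homotopy equivalent to the sphere S^{|T|−1} (indeed K_{χ,T} is isomorphic to the boundary complex of the |T|-dimensional cross polytope). If |supp(χ_T)| is odd, then the geometric realization of K_{χ,T} is contractible. -/
/-- Faces of the boundary complex `K` of the `n`-dimensional cross polytope on the vertex
set `{1,…,2n}`: the subsets containing no antipodal pair `{i, n+i}` (`1 ≤ i ≤ n`). -/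
def crossFace (n : ℕ) (t : Finset ℕ) : Prop :=
  t ⊆ Finset.Icc 1 (2 * n) ∧ ∀ i ∈ Finset.Icc 1 n, ¬(i ∈ t ∧ n + i ∈ t)

/-- The geometric realization of an abstract simplicial complex with vertices among
`{0,…,m−1}`, whose faces are given by the predicate `K`: the space of convex weight
functions whose support is a face of `K`. -/
abbrev GeomReal (m : ℕ) (K : Finset ℕ → Prop) : Type :=
  {f : Fin m → ℝ // (∀ v, 0 ≤ f v) ∧ (∑ v, f v = 1) ∧
    K ((Finset.univ.filter (fun v => f v ≠ 0)).image Fin.val)}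

/-!
If `1 ∈ T` exactly when `#T` is odd, then `supp χ_T = {i, n + i | i ∈ T}` and the induced
subcomplex is the boundary of the `#T`-dimensional cross polytope. Its realization is the unit
sphere of `ℓ¹(T)`: the weights `x` go to `(x i - x (n + i))ᵢ`, and a face never carries both `i`
and `n + i`, so `|x i - x (n + i)| = x i + x (n + i)`. Radial projection then identifies it with
the Euclidean sphere.

Otherwise `supp χ_T` differs from that set only at the vertex `n + 1`, so it has odd size and
contains exactly one of the antipodal vertices `1` and `n + 1`. The subcomplex is then a cone
with that vertex as apex, and its realization is star-convex around the apex.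
-/

open Finset Function Metric

noncomputable section

section UnitSphere

variable {E F : Type*} [NormedAddCommGroup E] [NormedSpace ℝ E]
  [NormedAddCommGroup F] [NormedSpace ℝ F]

lemma ContinuousLinearEquiv.apply_ne_zero_of_mem_sphere (e : E ≃L[ℝ] F) (x : sphere (0 : E) 1) :
    e x ≠ 0 :=
  e.map_ne_zero_iff.2 (ne_zero_of_mem_unit_sphere x)

def ContinuousLinearEquiv.sphereMap (e : E ≃L[ℝ] F) (x : sphere (0 : E) 1) : sphere (0 : F) 1 :=
  ⟨‖e x‖⁻¹ • e x, by
    simp [norm_smul, inv_mul_cancel₀ (norm_ne_zero_iff.2 (e.apply_ne_zero_of_mem_sphere x))]⟩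

lemma ContinuousLinearEquiv.sphereMap_symm_sphereMap (e : E ≃L[ℝ] F) (x : sphere (0 : E) 1) :
    e.symm.sphereMap (e.sphereMap x) = x := by
  have hne : ‖e x‖ ≠ 0 := norm_ne_zero_iff.2 (e.apply_ne_zero_of_mem_sphere x)
  ext1
  simp [sphereMap, norm_smul, smul_smul, mul_inv_cancel₀ hne]

lemma ContinuousLinearEquiv.continuous_sphereMap (e : E ≃L[ℝ] F) : Continuous e.sphereMap := by
  have he : Continuous fun x : sphere (0 : E) 1 => e x := e.continuous.comp continuous_subtype_val
  exact ((he.norm.inv₀ fun x => norm_ne_zero_iff.2 (e.apply_ne_zero_of_mem_sphere x)).smul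
    he).subtype_mk _

def ContinuousLinearEquiv.sphereHomeomorph (e : E ≃L[ℝ] F) :
    sphere (0 : E) 1 ≃ₜ sphere (0 : F) 1 where
  toFun := e.sphereMap
  invFun := e.symm.sphereMap
  left_inv := e.sphereMap_symm_sphereMap
  right_inv y := by simpa using e.symm.sphereMap_symm_sphereMap y
  continuous_toFun := e.continuous_sphereMap
  continuous_invFun := e.symm.continuous_sphereMap

end UnitSphere

def weightSupport {m : ℕ} (f : Fin m → ℝ) : Finset ℕ :=
  (univ.filter fun v => f v ≠ 0).image Fin.val

lemma val_mem_weightSupport {m : ℕ} {f : Fin m → ℝ} {v : Fin m} :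
    (v : ℕ) ∈ weightSupport f ↔ f v ≠ 0 := by
  simp [weightSupport, Fin.val_inj]

lemma contractibleSpace_geomReal_of_isCone {m : ℕ} {K : Finset ℕ → Prop}
    (hK : IsLowerSet {t | K t}) (c : Fin m) (hcK : K {(c : ℕ)})
    (hc : ∀ t, K t → K (insert (c : ℕ) t)) :
    ContractibleSpace (GeomReal m K) := by
  let s : Set (Fin m → ℝ) := {f | (∀ v, 0 ≤ f v) ∧ ∑ v, f v = 1 ∧ K (weightSupport f)}
  have hapex : Pi.single c 1 ∈ s := by
    refine ⟨fun v => ?_, by simp, ?_⟩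
    · by_cases hv : v = c <;> simp [hv]
    · convert hcK
      ext j
      simp [weightSupport, Pi.single_apply, eq_comm]
  have hstar : StarConvex ℝ (Pi.single c 1) s := by
    rintro f ⟨hf0, hf1, hfK⟩ p q hp hq hpq
    refine ⟨fun v => ?_, ?_, hK ?_ (hc _ hfK)⟩
    · have := hapex.1 v
      simp only [Pi.add_apply, Pi.smul_apply, smul_eq_mul]
      exact add_nonneg (mul_nonneg hp this) (mul_nonneg hq (hf0 v))
    · simp [sum_add_distrib, ← mul_sum, hf1, hpq]
    · intro j hj
      obtain ⟨v, hv, rfl⟩ := mem_image.1 hj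
      by_cases hvc : v = c
      · simp [hvc]
      · refine mem_insert_of_mem (val_mem_weightSupport.2 fun h => ?_)
        simp [hvc, h] at hv
  exact hstar.contractibleSpace ⟨_, hapex⟩

lemma posPart_sub_of_eq_zero_or {p q : ℝ} (hp : 0 ≤ p) (hq : 0 ≤ q) (h : p = 0 ∨ q = 0) :
    (p - q)⁺ = p := by
  rcases h with rfl | rfl <;> simp [hp, hq]

lemma negPart_sub_of_eq_zero_or {p q : ℝ} (hp : 0 ≤ p) (hq : 0 ≤ q) (h : p = 0 ∨ q = 0) :
    (p - q)⁻ = q := by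
  rw [← posPart_neg, neg_sub, posPart_sub_of_eq_zero_or hq hp h.symm]

section CrossPolytope

variable {m : ℕ} {ι : Type*} {a b : ι → Fin m}

/-- Faces of the boundary complex of the cross polytope whose antipodal vertex pairs are
`a i, b i`. -/
def IsCrossFace (a b : ι → Fin m) (t : Finset ℕ) : Prop :=
  (∀ j ∈ t, ∃ i, (a i : ℕ) = j ∨ (b i : ℕ) = j) ∧ ∀ i, ¬((a i : ℕ) ∈ t ∧ (b i : ℕ) ∈ t)

lemma sum_eq_sum_antipodal [Fintype ι] (ha : Injective a) (hb : Injective b)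
    (hab : ∀ i j, a i ≠ b j) {f : Fin m → ℝ} (hf : ∀ v, f v ≠ 0 → ∃ i, a i = v ∨ b i = v) :
    ∑ v, f v = ∑ i, (f (a i) + f (b i)) := by
  classical
  have hdisj : Disjoint (univ.image a) (univ.image b) := by
    simp only [disjoint_left, mem_image, mem_univ, true_and]
    rintro _ ⟨i, rfl⟩ ⟨j, hj⟩
    exact hab i j hj.symm
  rw [← sum_subset (subset_univ (univ.image a ∪ univ.image b)), sum_union hdisj,
    sum_image ha.injOn, sum_image hb.injOn, sum_add_distrib]
  intro v _ hv
  by_contra hfv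
  obtain ⟨i, hi | hi⟩ := hf v hfv <;> simp [← hi] at hv

namespace IsCrossFace

variable (x : GeomReal m (IsCrossFace a b))

lemma exists_of_ne_zero {v : Fin m} (hv : x.1 v ≠ 0) : ∃ i, a i = v ∨ b i = v := by
  obtain ⟨i, hi⟩ := x.2.2.2.1 v (by simpa [Fin.val_inj] using hv)
  exact ⟨i, by simpa only [Fin.val_inj] using hi⟩

lemma eq_zero_or (i : ι) : x.1 (a i) = 0 ∨ x.1 (b i) = 0 := by
  by_contra! h
  exact x.2.2.2.2 i ⟨by simpa [Fin.val_inj] using h.1, by simpa [Fin.val_inj] using h.2⟩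

end IsCrossFace

def crossToL1 (x : GeomReal m (IsCrossFace a b)) : PiLp 1 (fun _ : ι => ℝ) :=
  WithLp.toLp 1 fun i => x.1 (a i) - x.1 (b i)

lemma crossToL1_apply (x : GeomReal m (IsCrossFace a b)) (i : ι) :
    crossToL1 x i = x.1 (a i) - x.1 (b i) := rfl

variable [Fintype ι]

def crossOfL1 (a b : ι → Fin m) (y : PiLp 1 (fun _ : ι => ℝ)) (v : Fin m) : ℝ :=
  ∑ i, ((if a i = v then (y i)⁺ else 0) + if b i = v then (y i)⁻ else 0)

variable (y : PiLp 1 (fun _ : ι => ℝ))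

lemma crossOfL1_apply_left (ha : Injective a) (hab : ∀ i j, a i ≠ b j) (j : ι) :
    crossOfL1 a b y (a j) = (y j)⁺ := by
  classical
  simp [crossOfL1, ha.eq_iff, fun i => (hab j i).symm]

lemma crossOfL1_apply_right (hb : Injective b) (hab : ∀ i j, a i ≠ b j) (j : ι) :
    crossOfL1 a b y (b j) = (y j)⁻ := by
  classical
  simp [crossOfL1, hb.eq_iff, hab]

lemma exists_of_crossOfL1_ne_zero {v : Fin m} (hv : crossOfL1 a b y v ≠ 0) :
    ∃ i, a i = v ∨ b i = v := by
  by_contra! h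
  simp [crossOfL1, h] at hv

lemma crossOfL1_nonneg (v : Fin m) : 0 ≤ crossOfL1 a b y v :=
  sum_nonneg fun i _ => add_nonneg (by split_ifs <;> simp) (by split_ifs <;> simp)

lemma sum_crossOfL1 (ha : Injective a) (hb : Injective b) (hab : ∀ i j, a i ≠ b j) :
    ∑ v, crossOfL1 a b y v = ‖y‖ := by
  rw [sum_eq_sum_antipodal ha hb hab fun _ => exists_of_crossOfL1_ne_zero y, PiLp.norm_eq_of_L1]
  simp [crossOfL1_apply_left y ha hab, crossOfL1_apply_right y hb hab, posPart_add_negPart]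

lemma isCrossFace_weightSupport_crossOfL1 (ha : Injective a) (hb : Injective b)
    (hab : ∀ i j, a i ≠ b j) : IsCrossFace a b (weightSupport (crossOfL1 a b y)) := by
  refine ⟨fun j hj => ?_, fun i ⟨hai, hbi⟩ => ?_⟩
  · obtain ⟨v, hv, rfl⟩ := mem_image.1 hj
    obtain ⟨i, hi⟩ := exists_of_crossOfL1_ne_zero y (mem_filter.1 hv).2
    exact ⟨i, by simpa only [Fin.val_inj] using hi⟩
  · rw [val_mem_weightSupport, crossOfL1_apply_left y ha hab] at hai
    rw [val_mem_weightSupport, crossOfL1_apply_right y hb hab] at hbi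
    exact hbi (negPart_eq_zero.2 (posPart_pos_iff.1 ((posPart_nonneg _).lt_of_ne' hai)).le)

lemma norm_crossToL1 (ha : Injective a) (hb : Injective b) (hab : ∀ i j, a i ≠ b j)
    (x : GeomReal m (IsCrossFace a b)) : ‖crossToL1 x‖ = 1 := by
  rw [PiLp.norm_eq_of_L1, ← x.2.2.1,
    sum_eq_sum_antipodal ha hb hab fun _ => IsCrossFace.exists_of_ne_zero x]
  refine sum_congr rfl fun i _ => ?_
  have h := IsCrossFace.eq_zero_or x i
  rw [crossToL1_apply, Real.norm_eq_abs, ← posPart_add_negPart,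
    posPart_sub_of_eq_zero_or (x.2.1 _) (x.2.1 _) h,
    negPart_sub_of_eq_zero_or (x.2.1 _) (x.2.1 _) h]

lemma crossOfL1_crossToL1 (ha : Injective a) (hb : Injective b) (hab : ∀ i j, a i ≠ b j)
    (x : GeomReal m (IsCrossFace a b)) : crossOfL1 a b (crossToL1 x) = x.1 := by
  funext v
  by_cases hv : ∃ i, a i = v ∨ b i = v
  · obtain ⟨i, rfl | rfl⟩ := hv
    · rw [crossOfL1_apply_left _ ha hab, crossToL1_apply,
        posPart_sub_of_eq_zero_or (x.2.1 _) (x.2.1 _) (IsCrossFace.eq_zero_or x i)]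
    · rw [crossOfL1_apply_right _ hb hab, crossToL1_apply,
        negPart_sub_of_eq_zero_or (x.2.1 _) (x.2.1 _) (IsCrossFace.eq_zero_or x i)]
  · rw [not_ne_iff.1 (mt (exists_of_crossOfL1_ne_zero _) hv),
      not_ne_iff.1 (mt (IsCrossFace.exists_of_ne_zero x) hv)]

lemma crossOfL1_mem (ha : Injective a) (hb : Injective b) (hab : ∀ i j, a i ≠ b j)
    (y : sphere (0 : PiLp 1 (fun _ : ι => ℝ)) 1) :
    (∀ v, 0 ≤ crossOfL1 a b y v) ∧ ∑ v, crossOfL1 a b y v = 1 ∧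
      IsCrossFace a b (weightSupport (crossOfL1 a b y)) :=
  ⟨crossOfL1_nonneg y.1, (sum_crossOfL1 y.1 ha hb hab).trans (mem_sphere_zero_iff_norm.1 y.2),
    isCrossFace_weightSupport_crossOfL1 y.1 ha hb hab⟩

def crossPolytopeHomeomorph (ha : Injective a) (hb : Injective b) (hab : ∀ i j, a i ≠ b j) :
    GeomReal m (IsCrossFace a b) ≃ₜ sphere (0 : PiLp 1 (fun _ : ι => ℝ)) 1 where
  toFun x := ⟨crossToL1 x, by simpa using norm_crossToL1 ha hb hab x⟩
  invFun y := ⟨crossOfL1 a b y, crossOfL1_mem ha hb hab y⟩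
  left_inv x := Subtype.ext (crossOfL1_crossToL1 ha hb hab x)
  right_inv y := by
    ext i
    simp [crossToL1_apply, crossOfL1_apply_left _ ha hab, crossOfL1_apply_right _ hb hab]
  continuous_toFun := by
    have hx (v : Fin m) : Continuous fun x : GeomReal m (IsCrossFace a b) => x.1 v :=
      (continuous_apply v).comp continuous_subtype_val
    exact ((PiLp.continuous_toLp 1 _).comp (continuous_pi fun i => (hx _).sub (hx _))).subtype_mk _
  continuous_invFun := by
    refine Continuous.subtype_mk (continuous_pi fun v => continuous_finsetSum _ fun i _ => ?_) _
    have hy : Continuous fun y : sphere (0 : PiLp 1 (fun _ : ι => ℝ)) 1 => y.1 i :=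
      (PiLp.continuous_apply 1 _ i).comp continuous_subtype_val
    exact (Continuous.if_const _ (continuous_posPart.comp hy) continuous_const).add
      (Continuous.if_const _ (continuous_negPart.comp hy) continuous_const)

end CrossPolytope

lemma even_card_iff_of_erase_eq {α : Type*} [DecidableEq α] {s t : Finset α} {x : α}
    (h : s.erase x = t.erase x) (ht : Even #t) : Even #s ↔ (x ∈ s ↔ x ∈ t) := by
  have hcard (u : Finset α) : #u = #(u.erase x) + if x ∈ u then 1 else 0 := by
    split_ifs with hx
    · exact (card_erase_add_one hx).symm
    · rw [erase_eq_of_notMem hx, add_zero]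
  rw [hcard t, ← h] at ht
  rw [hcard s]
  split_ifs at ht ⊢ <;> simp only [Nat.even_add_one, add_zero] at ht ⊢ <;> tauto

section Klein

variable {n : ℕ} {T : Finset ℕ}

def withAntipodes (n : ℕ) (T : Finset ℕ) : Finset ℕ := T ∪ T.image (n + ·)

lemma mem_withAntipodes {j : ℕ} : j ∈ withAntipodes n T ↔ j ∈ T ∨ ∃ i ∈ T, n + i = j := by
  simp [withAntipodes]

lemma mem_withAntipodes_of_le (hT : T ⊆ Icc 1 n) {j : ℕ} (hj : j ≤ n) :
    j ∈ withAntipodes n T ↔ j ∈ T := by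
  refine mem_withAntipodes.trans ⟨?_, Or.inl⟩
  rintro (h | ⟨i, hi, rfl⟩)
  · exact h
  · have := (mem_Icc.1 (hT hi)).1
    omega

lemma add_mem_withAntipodes (hT : T ⊆ Icc 1 n) {j : ℕ} (hj : 0 < j) :
    n + j ∈ withAntipodes n T ↔ j ∈ T := by
  refine mem_withAntipodes.trans ⟨?_, fun h => Or.inr ⟨j, h, rfl⟩⟩
  rintro (h | ⟨i, hi, hij⟩)
  · have := (mem_Icc.1 (hT h)).2
    omega
  · rwa [← add_left_cancel hij]

lemma card_withAntipodes (hT : T ⊆ Icc 1 n) : #(withAntipodes n T) = 2 * #T := by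
  have hdisj : Disjoint T (T.image (n + ·)) := by
    refine disjoint_left.2 fun j hj hj' => ?_
    obtain ⟨i, hi, rfl⟩ := mem_image.1 hj'
    have := (mem_Icc.1 (hT hi)).1
    have := (mem_Icc.1 (hT hj)).2
    omega
  rw [withAntipodes, card_union_of_disjoint hdisj,
    card_image_of_injective _ (add_right_injective n)]
  ring

lemma sum_chiEntry (j : ℕ) :
    ∑ i ∈ T, chiEntry n i j = (#{i ∈ T | j = i ∨ j = n + 1 ∨ j = n + i} : ZMod 2) := by
  simp [chiEntry, sum_boole]

lemma mem_chiSupp {j : ℕ} :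
    j ∈ chiSupp n T ↔ j ∈ Icc 1 (2 * n) ∧ Odd #{i ∈ T | j = i ∨ j = n + 1 ∨ j = n + i} := by
  rw [chiSupp, mem_filter, sum_chiEntry, ZMod.natCast_ne_zero_iff_odd]

lemma add_one_mem_chiSupp (hT : T ⊆ Icc 1 n) : n + 1 ∈ chiSupp n T ↔ Odd #T := by
  rw [mem_chiSupp, filter_true_of_mem fun i _ => Or.inr (Or.inl rfl), and_iff_right_iff_imp]
  intro hodd
  obtain ⟨i, hi⟩ := card_pos.1 hodd.pos
  have := mem_Icc.1 (hT hi)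
  exact mem_Icc.2 ⟨by omega, by omega⟩

lemma mem_chiSupp_of_ne (hT : T ⊆ Icc 1 n) {j : ℕ} (hj : j ≠ n + 1) :
    j ∈ chiSupp n T ↔ j ∈ withAntipodes n T := by
  have hbound {i : ℕ} (hi : i ∈ T) : 1 ≤ i ∧ i ≤ n := mem_Icc.1 (hT hi)
  set F := T.filter fun i => j = i ∨ j = n + 1 ∨ j = n + i
  have hF : #F ≤ 1 := card_le_one.2 fun i hi i' hi' => by
    simp only [F, mem_filter] at hi hi'
    have := hbound hi.1
    have := hbound hi'.1
    omega
  have hodd : Odd #F ↔ F.Nonempty := by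
    rw [← card_pos, Nat.odd_iff]
    omega
  rw [mem_chiSupp, hodd, mem_withAntipodes]
  simp only [F, Finset.Nonempty, mem_filter, mem_Icc]
  constructor
  · rintro ⟨-, i, hi, rfl | h | rfl⟩
    exacts [Or.inl hi, absurd h hj, Or.inr ⟨i, hi, rfl⟩]
  · rintro (h | ⟨i, hi, rfl⟩)
    · have := hbound h
      exact ⟨by omega, j, h, Or.inl rfl⟩
    · have := hbound hi
      exact ⟨by omega, i, hi, Or.inr (Or.inr rfl)⟩

lemma chiSupp_erase (hT : T ⊆ Icc 1 n) :
    (chiSupp n T).erase (n + 1) = (withAntipodes n T).erase (n + 1) := by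
  ext j
  simp only [mem_erase]
  exact and_congr_right (mem_chiSupp_of_ne hT)

lemma even_card_chiSupp_iff (hT : T ⊆ Icc 1 n) : Even #(chiSupp n T) ↔ (1 ∈ T ↔ Odd #T) := by
  rw [even_card_iff_of_erase_eq (chiSupp_erase hT) (card_withAntipodes hT ▸ even_two_mul _),
    add_one_mem_chiSupp hT, add_mem_withAntipodes hT one_pos]
  exact iff_comm

lemma chiSupp_eq_withAntipodes (hT : T ⊆ Icc 1 n) (h : 1 ∈ T ↔ Odd #T) :
    chiSupp n T = withAntipodes n T := by
  ext j
  rcases eq_or_ne j (n + 1) with rfl | hj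
  · rw [add_one_mem_chiSupp hT, add_mem_withAntipodes hT one_pos, h]
  · exact mem_chiSupp_of_ne hT hj

lemma crossFace_empty : crossFace n ∅ := ⟨empty_subset _, by simp⟩

lemma crossFace_mono {s t : Finset ℕ} (hst : s ⊆ t) (ht : crossFace n t) : crossFace n s :=
  ⟨hst.trans ht.1, fun i hi h => ht.2 i hi ⟨hst h.1, hst h.2⟩⟩

lemma crossFace_insert {S t : Finset ℕ} {i c : ℕ} (hi : i ∈ Icc 1 n) (hc : c = i ∨ c = n + i)
    (hcS : c ∈ S) (hS : ¬(i ∈ S ∧ n + i ∈ S)) (ht : crossFace n t) (htS : t ⊆ S) :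
    crossFace n (insert c t) := by
  have hi' := mem_Icc.1 hi
  have hsub : insert c t ⊆ S := insert_subset hcS htS
  refine ⟨insert_subset (mem_Icc.2 (by omega)) ht.1, fun j hj ⟨hj₁, hj₂⟩ => ?_⟩
  have hj' := mem_Icc.1 hj
  by_cases hcj : c = j ∨ c = n + j
  · obtain rfl : j = i := by omega
    exact hS ⟨hsub hj₁, hsub hj₂⟩
  · obtain ⟨hcj₁, hcj₂⟩ := not_or.1 hcj
    exact ht.2 j hj ⟨(mem_insert.1 hj₁).resolve_left (Ne.symm hcj₁),
      (mem_insert.1 hj₂).resolve_left (Ne.symm hcj₂)⟩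

lemma contractibleSpace_of_xor {S : Finset ℕ} {i : ℕ} (hi : i ∈ Icc 1 n)
    (h : Xor (i ∈ S) (n + i ∈ S)) :
    ContractibleSpace (GeomReal (2 * n + 1) fun t => crossFace n t ∧ t ⊆ S) := by
  obtain ⟨c, hc, hcS⟩ : ∃ c, (c = i ∨ c = n + i) ∧ c ∈ S := by
    rcases h with h | h
    exacts [⟨i, Or.inl rfl, h.1⟩, ⟨n + i, Or.inr rfl, h.1⟩]
  have hS : ¬(i ∈ S ∧ n + i ∈ S) := by rcases h with h | h <;> tauto
  have hins (t : Finset ℕ) (ht : crossFace n t ∧ t ⊆ S) :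
      crossFace n (insert c t) ∧ insert c t ⊆ S :=
    ⟨crossFace_insert hi hc hcS hS ht.1 ht.2, insert_subset hcS ht.2⟩
  have hc' : c < 2 * n + 1 := by have := mem_Icc.1 hi; omega
  exact contractibleSpace_geomReal_of_isCone
    (fun t s hst ht => ⟨crossFace_mono hst ht.1, hst.trans ht.2⟩) ⟨c, hc'⟩
    (by simpa using hins ∅ ⟨crossFace_empty, empty_subset _⟩) hins

def lowerVertex (hT : T ⊆ Icc 1 n) (i : T) : Fin (2 * n + 1) :=
  ⟨i, by have := mem_Icc.1 (hT i.2); omega⟩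

def upperVertex (hT : T ⊆ Icc 1 n) (i : T) : Fin (2 * n + 1) :=
  ⟨n + i, by have := mem_Icc.1 (hT i.2); omega⟩

lemma lowerVertex_injective (hT : T ⊆ Icc 1 n) : Injective (lowerVertex hT) :=
  fun _ _ h => Subtype.ext (Fin.val_eq_of_eq h)

lemma upperVertex_injective (hT : T ⊆ Icc 1 n) : Injective (upperVertex hT) :=
  fun _ _ h => Subtype.ext (Nat.add_left_cancel (Fin.val_eq_of_eq h))

lemma lowerVertex_ne_upperVertex (hT : T ⊆ Icc 1 n) (i j : T) :
    lowerVertex hT i ≠ upperVertex hT j := fun h => by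
  have := Fin.val_eq_of_eq h
  have := mem_Icc.1 (hT i.2)
  have := mem_Icc.1 (hT j.2)
  simp only [lowerVertex, upperVertex] at *
  omega

lemma crossFace_and_subset_withAntipodes (hT : T ⊆ Icc 1 n) :
    (fun t => crossFace n t ∧ t ⊆ withAntipodes n T) =
      IsCrossFace (lowerVertex hT) (upperVertex hT) := by
  ext t
  simp only [IsCrossFace, lowerVertex, upperVertex, crossFace, Subtype.exists, exists_prop,
    Subtype.forall]
  constructor
  · rintro ⟨⟨-, hpair⟩, htS⟩
    refine ⟨fun j hj => ?_, fun i hi => hpair i (hT hi)⟩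
    rcases mem_withAntipodes.1 (htS hj) with h | ⟨i, hi, rfl⟩
    exacts [⟨j, h, Or.inl rfl⟩, ⟨i, hi, Or.inr rfl⟩]
  · rintro ⟨hcover, hpair⟩
    have hS : t ⊆ withAntipodes n T := fun j hj => by
      obtain ⟨i, hi, rfl | rfl⟩ := hcover j hj
      exacts [mem_withAntipodes.2 (Or.inl hi), mem_withAntipodes.2 (Or.inr ⟨i, hi, rfl⟩)]
    refine ⟨⟨fun j hj => ?_, fun i hi hit => ?_⟩, hS⟩
    · obtain ⟨i, hi, rfl | rfl⟩ := hcover j hj <;>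
        · have := mem_Icc.1 (hT hi)
          exact mem_Icc.2 ⟨by omega, by omega⟩
    · exact hpair i ((mem_withAntipodes_of_le hT (mem_Icc.1 hi).2).1 (hS hit.1)) hit

def l1EquivEuclidean (T : Finset ℕ) :
    PiLp 1 (fun _ : T => ℝ) ≃L[ℝ] EuclideanSpace ℝ (Fin #T) :=
  (PiLp.continuousLinearEquiv 1 ℝ _).trans
    ((ContinuousLinearEquiv.piCongrLeft ℝ (fun _ => ℝ) T.equivFin).trans
      (PiLp.continuousLinearEquiv 2 ℝ _).symm)

lemma nonempty_homeomorph_sphere_withAntipodes (hT : T ⊆ Icc 1 n) :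
    Nonempty (GeomReal (2 * n + 1) (fun t => crossFace n t ∧ t ⊆ withAntipodes n T) ≃ₜ
      sphere (0 : EuclideanSpace ℝ (Fin #T)) 1) := by
  rw [crossFace_and_subset_withAntipodes hT]
  exact ⟨(crossPolytopeHomeomorph (lowerVertex_injective hT) (upperVertex_injective hT)
    (lowerVertex_ne_upperVertex hT)).trans (l1EquivEuclidean T).sphereHomeomorph⟩

end Klein

end

theorem geomReal_subcomplex_klein_general (n : ℕ) (T : Finset ℕ)
    (hT : T ⊆ Finset.Icc 1 n) :
    (Even (chiSupp n T).card →
      Nonempty (ContinuousMap.HomotopyEquiv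
        (GeomReal (2 * n + 1) (fun t => crossFace n t ∧ t ⊆ chiSupp n T))
        (Metric.sphere (0 : EuclideanSpace ℝ (Fin T.card)) 1))) ∧
    (¬ Even (chiSupp n T).card →
      ContractibleSpace
        (GeomReal (2 * n + 1) (fun t => crossFace n t ∧ t ⊆ chiSupp n T))) := by
  refine ⟨fun heven => ?_, fun hodd => ?_⟩
  · rw [chiSupp_eq_withAntipodes hT ((even_card_chiSupp_iff hT).1 heven)]
    exact (nonempty_homeomorph_sphere_withAntipodes hT).map Homeomorph.toHomotopyEquiv
  · have hmismatch : ¬(1 ∈ T ↔ Odd #T) := mt (even_card_chiSupp_iff hT).2 hodd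
    obtain ⟨i, hi⟩ : T.Nonempty := nonempty_iff_ne_empty.2 fun h => by simp [h] at hmismatch
    have hn : 1 ≤ n := (mem_Icc.1 (hT hi)).1.trans (mem_Icc.1 (hT hi)).2
    refine contractibleSpace_of_xor (mem_Icc.2 ⟨le_rfl, hn⟩) ?_
    rwa [xor_iff_not_iff, mem_chiSupp_of_ne hT (by omega), mem_withAntipodes_of_le hT hn,
      add_one_mem_chiSupp hT]

/-- Let `n ≥ 2` and `T ⊆ {1,…,n}` nonempty. If `|supp(χ_T)|` is even then
the realization of the induced subcomplex `K_{χ,T}` of the cross polytope boundary on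
`supp(χ_T)` is homotopy equivalent to the sphere `S^{|T|−1}`; if `|supp(χ_T)|` is odd then
it is contractible. -/
theorem geomReal_subcomplex_klein (n : ℕ) (hn : 2 ≤ n) (T : Finset ℕ)
    (hT : T ⊆ Finset.Icc 1 n) (hne : T.Nonempty) :
    (Even (chiSupp n T).card →
      Nonempty (ContinuousMap.HomotopyEquiv
        (GeomReal (2 * n + 1) (fun t => crossFace n t ∧ t ⊆ chiSupp n T))
        (Metric.sphere (0 : EuclideanSpace ℝ (Fin T.card)) 1))) ∧
    (¬ Even (chiSupp n T).card →
      ContractibleSpace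
        (GeomReal (2 * n + 1) (fun t => crossFace n t ∧ t ⊆ chiSupp n T))) :=
  geomReal_subcomplex_klein_general n T hT
end

section
/- Let n ≥ 3 and let T ⊆ {1,…,n} be nonempty with T ∩ {n−1, n} = ∅ (so T ⊆ {1,…,n−2}). If |T| is even, the geometric realization of the induced subcomplex K'_{χ',T} is homotopy equivalent to the sphere S^{|T|−1}. If |T| is odd, the geometric realization of K'_{χ',T} is contractible (it is a cone with apex the vertex 2n+1). -/
/-!
Since `T ⊆ {1,…,n−2}`, the support of `χ'_T` is `T ∪ (n + T)`, together with the vertex `2n+1`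
exactly when `|T|` is odd, and it meets the 5-cycle at most in `2n+1`. So the induced subcomplex
consists of the subsets of this support that contain no antipodal pair `{i, n+i}`.

For odd `|T|` this is a cone with apex `2n+1`, whose realization is star-convex about that
vertex. For even `|T|` it is the boundary of the cross polytope on the pairs `{i, n+i}`; the map
`f ↦ (f i − f (n+i))ᵢ` identifies its realization with the unit sphere of `ℓ¹(T)`, and radial
projection carries that onto the Euclidean unit sphere.
-/

/-- The `(i,j)` entry of the characteristic matrix `χ'` of the small cover over
`P₅ × I^{n−2}` (rows `1,…,n`, columns `1,…,2n+1`): row `i` has `1`'s exactly at positions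
`i`, `n+i` and `2n+1`. -/
def chi'Entry (n i j : ℕ) : ZMod 2 :=
  if j = i ∨ j = n + i ∨ j = 2 * n + 1 then 1 else 0

/-- The support of `χ'_T = ∑_{i∈T} (row i of χ')`, as a subset of `{1,…,2n+1}`. -/
def chi'Supp (n : ℕ) (T : Finset ℕ) : Finset ℕ :=
  (Finset.Icc 1 (2 * n + 1)).filter (fun j => (∑ i ∈ T, chi'Entry n i j) ≠ 0)

/-- The vertex set of the 5-cycle `C₅`, in cyclic order `n−1, n, 2n−1, 2n, 2n+1`. -/
def pentCyc (n : ℕ) : Finset ℕ := {n - 1, n, 2 * n - 1, 2 * n, 2 * n + 1}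

/-- The edges of the 5-cycle `C₅` with vertices `n−1, n, 2n−1, 2n, 2n+1` in cyclic order. -/
def pentEdges (n : ℕ) : Finset (Finset ℕ) :=
  {{n - 1, n}, {n, 2 * n - 1}, {2 * n - 1, 2 * n}, {2 * n, 2 * n + 1}, {2 * n + 1, n - 1}}

/-- Faces of `K'`, the simplicial join of the 5-cycle `C₅` (on vertices
`n−1, n, 2n−1, 2n, 2n+1`) with the boundary complex of the `(n−2)`-dimensional cross
polytope on `{1,…,n−2} ∪ {n+1,…,2n−2}` with antipodal pairs `{i, n+i}` (`1 ≤ i ≤ n−2`):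
`t` is a face iff its intersection with the cycle is a face of the cycle (empty, a vertex,
or an edge) and it contains no antipodal pair. -/
def pentFace (n : ℕ) (t : Finset ℕ) : Prop :=
  t ⊆ Finset.Icc 1 (2 * n + 1) ∧
  (∀ i ∈ Finset.Icc 1 (n - 2), ¬(i ∈ t ∧ n + i ∈ t)) ∧
  (t ∩ pentCyc n = ∅ ∨ (∃ a ∈ pentCyc n, t ∩ pentCyc n = {a}) ∨ t ∩ pentCyc n ∈ pentEdges n)

open Finset Metric Function

namespace GeomReal

variable {m : ℕ} {K : Finset ℕ → Prop}

theorem contractibleSpace_of_cone (a : Fin m) (ha : K {(a : ℕ)})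
    (hK : ∀ s t, K s → t ⊆ insert (a : ℕ) s → K t) : ContractibleSpace (GeomReal m K) := by
  let S : Set (Fin m → ℝ) := {f | (∀ v, 0 ≤ f v) ∧ (∑ v, f v = 1) ∧
    K ((univ.filter (fun v => f v ≠ 0)).image Fin.val)}
  have hδ : ∀ v, (0 : ℝ) ≤ (Pi.single a 1 : Fin m → ℝ) v :=
    fun v => by by_cases hv : v = a <;> simp [hv]
  have hstar : StarConvex ℝ (Pi.single a 1) S := by
    rintro f ⟨hf0, hf1, hfK⟩ s t hs ht hst
    refine ⟨fun v => ?_, ?_, hK _ _ hfK ?_⟩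
    · simpa using add_nonneg (mul_nonneg hs (hδ v)) (mul_nonneg ht (hf0 v))
    · simp [sum_add_distrib, ← mul_sum, hf1, hst]
    · intro j hj
      obtain ⟨v, hv, rfl⟩ := mem_image.1 hj
      by_cases hva : v = a
      · simp [hva]
      · refine mem_insert_of_mem (mem_image.2 ⟨v, ?_, rfl⟩)
        simp_all
  have hapex : Pi.single a 1 ∈ S :=
    ⟨hδ, by simp,
      hK _ _ ha fun j hj => by simp_all [Pi.single_apply]⟩
  exact hstar.contractibleSpace ⟨_, hapex⟩

end GeomReal

namespace ContinuousLinearEquiv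

variable {E F : Type*} [NormedAddCommGroup E] [NormedSpace ℝ E] [NormedAddCommGroup F]
  [NormedSpace ℝ F] (L : E ≃L[ℝ] F)

noncomputable def sphereMap_s12 (x : sphere (0 : E) 1) : sphere (0 : F) 1 :=
  ⟨‖L x‖⁻¹ • L x, by
    have : L x ≠ 0 := L.map_ne_zero_iff.2 (ne_zero_of_mem_unit_sphere x)
    simp [norm_smul, this]⟩

theorem continuous_sphereMap_s12 : Continuous L.sphereMap_s12 := by
  have hL : Continuous fun x : sphere (0 : E) 1 => L x := L.continuous.comp continuous_subtype_val
  refine Continuous.subtype_mk ((hL.norm.inv₀ fun x => ?_).smul hL) _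
  simpa using ne_zero_of_mem_unit_sphere x

theorem symm_sphereMap_sphereMap (x : sphere (0 : E) 1) : L.symm.sphereMap_s12 (L.sphereMap_s12 x) = x := by
  have hx : ‖(x : E)‖ = 1 := by simp
  have hLx : 0 < ‖L x‖ := by simpa using ne_zero_of_mem_unit_sphere x
  ext1
  simp [sphereMap_s12, norm_smul, hx, hLx.ne', smul_smul]

noncomputable def unitSphereHomeomorph : sphere (0 : E) 1 ≃ₜ sphere (0 : F) 1 where
  toFun := L.sphereMap_s12
  invFun := L.symm.sphereMap_s12
  left_inv := L.symm_sphereMap_sphereMap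
  right_inv := L.symm.symm_sphereMap_sphereMap
  continuous_toFun := L.continuous_sphereMap_s12
  continuous_invFun := L.symm.continuous_sphereMap_s12

end ContinuousLinearEquiv

/-- Faces of the boundary of the cross polytope with antipodal vertex pairs
`e (inl i), e (inr i)`. -/
def crossPolytopeFace {ι : Type*} {m : ℕ} (e : ι ⊕ ι → Fin m) (t : Finset ℕ) : Prop :=
  (∀ j ∈ t, ∃ s, (e s : ℕ) = j) ∧ ∀ i, ¬((e (.inl i) : ℕ) ∈ t ∧ (e (.inr i) : ℕ) ∈ t)

namespace GeomReal

variable {m : ℕ} {ι : Type*} {e : ι ⊕ ι → Fin m}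

theorem apply_eq_zero_of_notMem_range (f : GeomReal m (crossPolytopeFace e)) {v : Fin m}
    (hv : v ∉ Set.range e) : f.1 v = 0 := by
  by_contra hfv
  obtain ⟨s, hs⟩ := f.2.2.2.1 v (mem_image_of_mem _ (by simpa using hfv))
  exact hv ⟨s, Fin.ext hs⟩

theorem apply_inl_eq_zero_or_apply_inr_eq_zero (f : GeomReal m (crossPolytopeFace e)) (i : ι) :
    f.1 (e (.inl i)) = 0 ∨ f.1 (e (.inr i)) = 0 := by
  by_contra! h
  exact f.2.2.2.2 i
    ⟨mem_image_of_mem _ (by simpa using h.1), mem_image_of_mem _ (by simpa using h.2)⟩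

theorem sum_apply_comp_eq_one [Fintype ι] (he : Injective e) (f : GeomReal m (crossPolytopeFace e)) :
    ∑ s, f.1 (e s) = 1 :=
  (Fintype.sum_of_injective e he _ _ (fun _ hv => apply_eq_zero_of_notMem_range f hv)
    fun _ => rfl).trans f.2.2.1

/-- On a face at most one of `f (e (inl i))`, `f (e (inr i))` is nonzero, so these
differences determine `f`. -/
def toL1 (f : GeomReal m (crossPolytopeFace e)) : PiLp 1 (fun _ : ι => ℝ) :=
  WithLp.toLp 1 fun i => f.1 (e (.inl i)) - f.1 (e (.inr i))

theorem abs_toL1_apply (f : GeomReal m (crossPolytopeFace e)) (i : ι) :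
    |toL1 f i| = f.1 (e (.inl i)) + f.1 (e (.inr i)) := by
  have h0 := f.2.1
  rcases apply_inl_eq_zero_or_apply_inr_eq_zero f i with h | h <;>
    simp [toL1, h, abs_of_nonneg (h0 _)]

theorem norm_toL1 [Fintype ι] (he : Injective e) (f : GeomReal m (crossPolytopeFace e)) :
    ‖toL1 f‖ = 1 := by
  simp only [PiLp.norm_eq_of_L1, Real.norm_eq_abs]
  simp_rw [abs_toL1_apply]
  rw [sum_add_distrib, ← Fintype.sum_sum_type (fun s => f.1 (e s)), sum_apply_comp_eq_one he]

variable (e) in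
noncomputable def ofL1 (x : PiLp 1 (fun _ : ι => ℝ)) : Fin m → ℝ :=
  extend e (Sum.elim (fun i => (x i)⁺) fun i => (x i)⁻) 0

theorem ofL1_inl (he : Injective e) (x : PiLp 1 (fun _ : ι => ℝ)) (i : ι) :
    ofL1 e x (e (.inl i)) = (x i)⁺ :=
  he.extend_apply _ _ _

theorem ofL1_inr (he : Injective e) (x : PiLp 1 (fun _ : ι => ℝ)) (i : ι) :
    ofL1 e x (e (.inr i)) = (x i)⁻ :=
  he.extend_apply _ _ _

theorem ofL1_of_notMem_range (x : PiLp 1 (fun _ : ι => ℝ)) {v : Fin m} (hv : v ∉ Set.range e) :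
    ofL1 e x v = 0 :=
  extend_apply' _ _ _ hv

theorem ofL1_mem [Fintype ι] (he : Injective e) {x : PiLp 1 (fun _ : ι => ℝ)} (hx : ‖x‖ = 1) :
    (∀ v, 0 ≤ ofL1 e x v) ∧ (∑ v, ofL1 e x v = 1) ∧
      crossPolytopeFace e ((univ.filter fun v => ofL1 e x v ≠ 0).image Fin.val) := by
  refine ⟨fun v => ?_, ?_, fun j hj => ?_, fun i ⟨hA, hB⟩ => ?_⟩
  · by_cases hv : ∃ s, e s = v
    · obtain ⟨⟨i⟩ | ⟨i⟩, rfl⟩ := hv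
      · simp [ofL1_inl he, posPart_nonneg]
      · simp [ofL1_inr he, negPart_nonneg]
    · simp [ofL1_of_notMem_range x hv]
  · rw [← Fintype.sum_of_injective e he _ _ (fun v hv => ofL1_of_notMem_range x hv)
      fun s => (he.extend_apply _ _ _).symm, Fintype.sum_sum_type, ← hx, PiLp.norm_eq_of_L1]
    simp [← sum_add_distrib, posPart_add_negPart]
  · obtain ⟨v, hv, rfl⟩ := mem_image.1 hj
    by_contra! h
    exact (mem_filter.1 hv).2 (ofL1_of_notMem_range x fun ⟨s, hs⟩ => h s (congrArg _ hs))
  · simp only [mem_image, mem_filter, mem_univ, true_and, Fin.val_inj, exists_eq_right,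
      ofL1_inl he, ofL1_inr he, ne_eq, posPart_eq_zero, negPart_eq_zero] at hA hB
    exact hA (not_le.1 hB).le

noncomputable def crossPolytopeHomeomorph [Fintype ι] (he : Injective e) :
    GeomReal m (crossPolytopeFace e) ≃ₜ sphere (0 : PiLp 1 (fun _ : ι => ℝ)) 1 where
  toFun f := ⟨toL1 f, by simp [norm_toL1 he]⟩
  invFun x := ⟨ofL1 e x, ofL1_mem he (mem_sphere_zero_iff_norm.1 x.2)⟩
  left_inv f := by
    ext v
    by_cases hv : ∃ s, e s = v
    · have h0 := f.2.1
      obtain ⟨⟨i⟩ | ⟨i⟩, rfl⟩ := hv <;>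
      rcases apply_inl_eq_zero_or_apply_inr_eq_zero f i with h | h <;>
        simp [toL1, ofL1_inl he, ofL1_inr he, h, h0]
    · simp [ofL1_of_notMem_range _ hv, apply_eq_zero_of_notMem_range f hv]
  right_inv x := by
    ext i
    simp [toL1, ofL1_inl he, ofL1_inr he, posPart_sub_negPart]
  continuous_toFun := by
    refine Continuous.subtype_mk ((PiLp.continuous_toLp 1 _).comp (continuous_pi fun i => ?_)) _
    exact ((continuous_apply _).comp continuous_subtype_val).sub
      ((continuous_apply _).comp continuous_subtype_val)
  continuous_invFun := by
    refine Continuous.subtype_mk (continuous_pi fun v => ?_) _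
    have hx (i : ι) : Continuous fun x : sphere (0 : PiLp 1 (fun _ : ι => ℝ)) 1 => x.1 i :=
      (PiLp.continuous_apply 1 _ i).comp continuous_subtype_val
    by_cases hv : ∃ s, e s = v
    · obtain ⟨⟨i⟩ | ⟨i⟩, rfl⟩ := hv
      · simp only [ofL1_inl he]
        exact continuous_posPart.comp (hx i)
      · simp only [ofL1_inr he]
        exact continuous_negPart.comp (hx i)
    · simpa only [ofL1_of_notMem_range _ hv] using continuous_const

end GeomReal

section Chi'

variable {n : ℕ} {T : Finset ℕ}

theorem mem_chi'Supp_iff (hT : T ⊆ Icc 1 (n - 2)) {j : ℕ} :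
    j ∈ chi'Supp n T ↔ j ∈ T ∨ (∃ i ∈ T, j = n + i) ∨ (j = 2 * n + 1 ∧ Odd #T) := by
  have hb : ∀ i ∈ T, 1 ≤ i ∧ i ≤ n - 2 := fun i hi => mem_Icc.1 (hT hi)
  simp only [chi'Supp, chi'Entry, mem_filter, mem_Icc, sum_boole, ZMod.natCast_ne_zero_iff_odd]
  by_cases hj : j = 2 * n + 1
  · subst hj
    rw [filter_true_of_mem fun _ _ => Or.inr (Or.inr rfl)]
    have hT : 2 * n + 1 ∉ T := fun h => by have := hb _ h; omega
    have hnT : ¬∃ i ∈ T, 2 * n + 1 = n + i := fun ⟨i, hi, h⟩ => by have := hb i hi; omega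
    simp [hT, hnT]
  · have hle : #(T.filter fun i => j = i ∨ j = n + i ∨ j = 2 * n + 1) ≤ 1 :=
      card_le_one.2 fun a ha b hb' => by
        have := hb a (mem_filter.1 ha).1; have := hb b (mem_filter.1 hb').1
        have := (mem_filter.1 ha).2; have := (mem_filter.1 hb').2; omega
    have hodd : Odd #(T.filter fun i => j = i ∨ j = n + i ∨ j = 2 * n + 1) ↔
        ∃ i ∈ T, j = i ∨ j = n + i := by
      rw [Nat.odd_iff, ← filter_nonempty_iff, ← card_pos]
      simp only [hj, or_false] at hle ⊢
      omega
    rw [hodd]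
    constructor
    · rintro ⟨-, i, hi, rfl | rfl⟩
      · exact Or.inl hi
      · exact Or.inr (Or.inl ⟨i, hi, rfl⟩)
    · rintro (h | ⟨i, hi, rfl⟩ | ⟨rfl, -⟩)
      · exact ⟨by have := hb j h; omega, j, h, Or.inl rfl⟩
      · exact ⟨by have := hb i hi; omega, i, hi, Or.inr rfl⟩
      · exact absurd rfl hj

theorem chi'Supp_inter_pentCyc_subset (hT : T ⊆ Icc 1 (n - 2)) :
    chi'Supp n T ∩ pentCyc n ⊆ {2 * n + 1} := by
  intro j hj
  obtain ⟨hjS, hjC⟩ := mem_inter.1 hj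
  simp only [pentCyc, mem_insert, mem_singleton] at hjC ⊢
  rcases (mem_chi'Supp_iff hT).1 hjS with h | ⟨i, hi, rfl⟩ | ⟨rfl, -⟩
  · have := mem_Icc.1 (hT h); omega
  · have := mem_Icc.1 (hT hi); omega
  · rfl

theorem pentFace_and_subset_chi'Supp_iff (hT : T ⊆ Icc 1 (n - 2)) {t : Finset ℕ} :
    pentFace n t ∧ t ⊆ chi'Supp n T ↔ t ⊆ chi'Supp n T ∧ ∀ i ∈ T, ¬(i ∈ t ∧ n + i ∈ t) := by
  refine ⟨fun ⟨⟨_, hanti, _⟩, ht⟩ => ⟨ht, fun i hi => hanti i (hT hi)⟩, fun ⟨ht, hanti⟩ => ?_⟩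
  refine ⟨⟨fun j hj => (mem_filter.1 (ht hj)).1, fun i hi ⟨hit, hnit⟩ => ?_, ?_⟩, ht⟩
  · have hiT : i ∈ T := by
      have := mem_Icc.1 hi
      rcases (mem_chi'Supp_iff hT).1 (ht hit) with h | ⟨i', hi', rfl⟩ | ⟨rfl, -⟩
      · exact h
      · have := mem_Icc.1 (hT hi'); omega
      · omega
    exact hanti i hiT ⟨hit, hnit⟩
  · have hsub : t ∩ pentCyc n ⊆ {2 * n + 1} :=
      (inter_subset_inter_right ht).trans (chi'Supp_inter_pentCyc_subset hT)
    rcases subset_singleton_iff.1 hsub with h | h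
    · exact Or.inl h
    · exact Or.inr (Or.inl ⟨2 * n + 1, by simp [pentCyc], h⟩)

theorem contractibleSpace_chi'Subcomplex (hT : T ⊆ Icc 1 (n - 2)) (hodd : Odd #T) :
    ContractibleSpace (GeomReal (2 * n + 2) fun t => pentFace n t ∧ t ⊆ chi'Supp n T) := by
  have hb : ∀ i ∈ Icc 1 (n - 2), i ≠ 2 * n + 1 := fun i hi => by have := mem_Icc.1 hi; omega
  have hapex : 2 * n + 1 ∈ chi'Supp n T := (mem_chi'Supp_iff hT).2 (Or.inr (Or.inr ⟨rfl, hodd⟩))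
  refine GeomReal.contractibleSpace_of_cone ⟨2 * n + 1, by omega⟩ ?_ ?_ <;>
    simp only [pentFace_and_subset_chi'Supp_iff hT]
  · refine ⟨singleton_subset_iff.2 hapex, fun i hi ⟨hi1, _⟩ => hb i (hT hi) (mem_singleton.1 hi1)⟩
  · rintro s t ⟨hs, hanti⟩ hts
    refine ⟨hts.trans (insert_subset hapex hs), fun i hi ⟨hit, hnit⟩ => hanti i hi ⟨?_, ?_⟩⟩
    · exact mem_of_mem_insert_of_ne (hts hit) (hb i (hT hi))
    · exact mem_of_mem_insert_of_ne (hts hnit) (by have := mem_Icc.1 (hT hi); omega)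

theorem exists_chi'Subcomplex_eq_crossPolytopeFace (hT : T ⊆ Icc 1 (n - 2)) (heven : Even #T) :
    ∃ e : T ⊕ T → Fin (2 * n + 2), Injective e ∧
      (fun t => pentFace n t ∧ t ⊆ chi'Supp n T) = crossPolytopeFace e := by
  have hb : ∀ i : T, (i : ℕ) ≤ n - 2 := fun i => (mem_Icc.1 (hT i.2)).2
  refine ⟨Sum.elim (fun i => ⟨i, by have := hb i; omega⟩) fun i => ⟨n + i, by have := hb i; omega⟩,
    ?_, ?_⟩
  · refine Injective.sumElim (fun i j h => ?_) (fun i j h => ?_) fun i j h => ?_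
    · exact Subtype.ext (Fin.mk.inj h)
    · exact Subtype.ext (Nat.add_left_cancel (Fin.mk.inj h))
    · have := Fin.mk.inj h; have := mem_Icc.1 (hT i.2); omega
  · have hsupp (j : ℕ) : j ∈ chi'Supp n T ↔ j ∈ T ∨ ∃ i ∈ T, j = n + i := by
      simp [mem_chi'Supp_iff hT, Nat.not_odd_iff_even.2 heven]
    funext t
    rw [pentFace_and_subset_chi'Supp_iff hT]
    simp [crossPolytopeFace, subset_iff, hsupp, Sum.exists, eq_comm]

end Chi'

theorem geomReal_pent_subcomplex_neither_general (n : ℕ) (T : Finset ℕ)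
    (hT : T ⊆ Finset.Icc 1 n) (h1 : n - 1 ∉ T) (h2 : n ∉ T) :
    (Even T.card →
      Nonempty (ContinuousMap.HomotopyEquiv
        (GeomReal (2 * n + 2) (fun t => pentFace n t ∧ t ⊆ chi'Supp n T))
        (Metric.sphere (0 : EuclideanSpace ℝ (Fin T.card)) 1))) ∧
    (¬ Even T.card →
      ContractibleSpace
        (GeomReal (2 * n + 2) (fun t => pentFace n t ∧ t ⊆ chi'Supp n T))) := by
  have hT' : T ⊆ Icc 1 (n - 2) := fun i hi => by
    have := mem_Icc.1 (hT hi)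
    have : i ≠ n - 1 := fun h => h1 (h ▸ hi)
    have : i ≠ n := fun h => h2 (h ▸ hi)
    exact mem_Icc.2 ⟨by omega, by omega⟩
  refine ⟨fun heven => ?_,
    fun hodd => contractibleSpace_chi'Subcomplex hT' (Nat.not_even_iff_odd.1 hodd)⟩
  obtain ⟨e, he, hK⟩ := exists_chi'Subcomplex_eq_crossPolytopeFace hT' heven
  let L : PiLp 1 (fun _ : T => ℝ) ≃L[ℝ] EuclideanSpace ℝ (Fin #T) :=
    .ofFinrankEq (by simp [(WithLp.linearEquiv 1 ℝ (T → ℝ)).finrank_eq])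
  rw [hK]
  exact ⟨((GeomReal.crossPolytopeHomeomorph he).trans L.unitSphereHomeomorph).toHomotopyEquiv⟩

/-- Let `n ≥ 3` and let `T ⊆ {1,…,n}` be nonempty with
`T ∩ {n−1, n} = ∅` (so `T ⊆ {1,…,n−2}`). If `|T|` is even, the realization of the induced
subcomplex `K'_{χ',T}` is homotopy equivalent to `S^{|T|−1}`; if `|T|` is odd, it is
contractible. -/
theorem geomReal_pent_subcomplex_neither (n : ℕ) (hn : 3 ≤ n) (T : Finset ℕ)
    (hT : T ⊆ Finset.Icc 1 n) (hne : T.Nonempty) (h1 : n - 1 ∉ T) (h2 : n ∉ T) :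
    (Even T.card →
      Nonempty (ContinuousMap.HomotopyEquiv
        (GeomReal (2 * n + 2) (fun t => pentFace n t ∧ t ⊆ chi'Supp n T))
        (Metric.sphere (0 : EuclideanSpace ℝ (Fin T.card)) 1))) ∧
    (¬ Even T.card →
      ContractibleSpace
        (GeomReal (2 * n + 2) (fun t => pentFace n t ∧ t ⊆ chi'Supp n T))) :=
  geomReal_pent_subcomplex_neither_general n T hT h1 h2
end
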